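/- arXiv:1903.01101 — 12 statements merged into one kernel-verified Lean document; each statement's English description precedes it below -/
import Mathlib

section
/- Suppose that the horizon-cone condition C^∞ ∩ A⁻¹(D^∞) = {0} holds, i.e., the only vector x with x ∈ C^∞ and Ax ∈ D^∞ is x = 0. Then for every x⁰ ∈ C, the sublevel set {x ∈ ℝⁿ : F(x) ≤ F(x⁰)} = {x ∈ C : d(Ax, D) ≤ d(Ax⁰, D)} is bounded. -/
open Filter Topology Metric
open scoped RealInnerProductSpace

noncomputable section

/-- The set of projections of `y` onto `S`. -/
def projSet {E : Type*} [NormedAddCommGroup E] (S : Set E) (y : E) : Set E :=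
  {z | z ∈ S ∧ dist y z = Metric.infDist y S}

/-- The horizon cone of `S`. -/
def horizonCone {E : Type*} [NormedAddCommGroup E] [NormedSpace ℝ E] (S : Set E) : Set E :=
  {x | ∃ (u : ℕ → E) (β : ℕ → ℝ), (∀ t, u t ∈ S) ∧ (∀ t, 0 < β t) ∧
    Tendsto β atTop (𝓝 (0 : ℝ)) ∧ Tendsto (fun t => β t • u t) atTop (𝓝 x)}

/-- The regular (Fréchet) normal cone to `S` at `x`. -/
def regNormalCone {E : Type*} [NormedAddCommGroup E] [InnerProductSpace ℝ E]
    (S : Set E) (x : E) : Set E :=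
  {v | x ∈ S ∧ ∀ ε > 0, ∃ δ > 0, ∀ u ∈ S, ‖u - x‖ < δ → ⟪v, u - x⟫ ≤ ε * ‖u - x‖}

/-- The limiting normal cone to `S` at `x`. -/
def normalCone {E : Type*} [NormedAddCommGroup E] [InnerProductSpace ℝ E]
    (S : Set E) (x : E) : Set E :=
  {v | x ∈ S ∧ ∃ (xs vs : ℕ → E), (∀ t, vs t ∈ regNormalCone S (xs t)) ∧
    Tendsto xs atTop (𝓝 x) ∧ Tendsto vs atTop (𝓝 v)}

/-- The regular (Fréchet) subdifferential at `x` of the function `φ + δ_C`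
(the real-valued function `φ` plus the indicator of `C`). -/
def regSubdiff {E : Type*} [NormedAddCommGroup E] [InnerProductSpace ℝ E]
    (φ : E → ℝ) (C : Set E) (x : E) : Set E :=
  {v | x ∈ C ∧ ∀ ε > 0, ∃ δ > 0, ∀ u ∈ C, ‖u - x‖ < δ →
      φ u - φ x - ⟪v, u - x⟫ ≥ -(ε * ‖u - x‖)}

/-- The limiting subdifferential at `x` of the function `φ + δ_C`. -/
def limSubdiff {E : Type*} [NormedAddCommGroup E] [InnerProductSpace ℝ E]
    (φ : E → ℝ) (C : Set E) (x : E) : Set E :=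
  {v | x ∈ C ∧ ∃ (xs vs : ℕ → E), (∀ t, vs t ∈ regSubdiff φ C (xs t)) ∧
    Tendsto xs atTop (𝓝 x) ∧ Tendsto (fun t => φ (xs t)) atTop (𝓝 (φ x)) ∧
    Tendsto vs atTop (𝓝 v)}

/-- The smooth part `x ↦ ½ d(Ax, D)²` of the split-feasibility objective
`F = ½ d(A·, D)² + δ_C`. -/
def phiF {n m : ℕ} (A : EuclideanSpace ℝ (Fin n) →L[ℝ] EuclideanSpace ℝ (Fin m))
    (D : Set (EuclideanSpace ℝ (Fin m))) (x : EuclideanSpace ℝ (Fin n)) : ℝ :=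
  Metric.infDist (A x) D ^ 2 / 2

/-- A polyhedral set: an intersection of finitely many closed half-spaces. -/
def IsPolyhedral {E : Type*} [NormedAddCommGroup E] [InnerProductSpace ℝ E] (S : Set E) : Prop :=
  ∃ (k : ℕ) (a : Fin k → E) (b : Fin k → ℝ), S = {x | ∀ i, ⟪a i, x⟫ ≤ b i}

end

/-- Under the horizon-cone condition `C^∞ ∩ A⁻¹(D^∞) = {0}`, every sublevel set
`{x ∈ C : d(Ax, D) ≤ d(Ax⁰, D)}` of the split-feasibility objective (with `x⁰ ∈ C`) is bounded. -/
theorem stmt_0 (n m : ℕ)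
    (A : EuclideanSpace ℝ (Fin n) →L[ℝ] EuclideanSpace ℝ (Fin m))
    (C : Set (EuclideanSpace ℝ (Fin n))) (D : Set (EuclideanSpace ℝ (Fin m)))
    (hCne : C.Nonempty) (hCcl : IsClosed C) (hDne : D.Nonempty) (hDcl : IsClosed D)
    (hhor : ∀ x, x ∈ horizonCone C → A x ∈ horizonCone D → x = 0)
    (x0 : EuclideanSpace ℝ (Fin n)) (hx0 : x0 ∈ C) :
    Bornology.IsBounded {x | x ∈ C ∧ Metric.infDist (A x) D ≤ Metric.infDist (A x0) D} := by
  set R := Metric.infDist (A x0) D with hR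
  by_contra hb
  rw [isBounded_iff_forall_norm_le] at hb
  push_neg at hb
  -- choose an unbounded sequence in the sublevel set
  choose u hu hnorm using fun t : ℕ => hb t
  have hnormpos : ∀ t : ℕ, (0 : ℝ) < ‖u t‖ := fun t =>
    lt_of_le_of_lt (Nat.cast_nonneg t) (hnorm t)
  set β : ℕ → ℝ := fun t => ‖u t‖⁻¹ with hβ
  have hβpos : ∀ t, 0 < β t := fun t => inv_pos.2 (hnormpos t)
  have hβ0 : Tendsto β atTop (𝓝 (0 : ℝ)) := by
    apply squeeze_zero' (Eventually.of_forall fun t => (hβpos t).le)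
      (g := fun t : ℕ => (t : ℝ)⁻¹)
    · filter_upwards [eventually_ge_atTop 1] with t ht
      have h1 : (0:ℝ) < (t:ℝ) := by exact_mod_cast ht
      exact inv_anti₀ h1 (hnorm t).le
    · exact tendsto_inv_atTop_zero.comp tendsto_natCast_atTop_atTop
  have hsph : ∀ t, β t • u t ∈ Metric.sphere (0 : EuclideanSpace ℝ (Fin n)) 1 := by
    intro t
    simp [hβ, norm_smul, abs_of_pos (hβpos t), inv_mul_cancel₀ (hnormpos t).ne']
  obtain ⟨x, hxsph, φ, hφ, hconv⟩ :=
    (isCompact_sphere (0 : EuclideanSpace ℝ (Fin n)) 1).tendsto_subseq hsph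
  have hxC : x ∈ horizonCone C := by
    refine ⟨u ∘ φ, β ∘ φ, fun t => (hu (φ t)).1, fun t => hβpos (φ t), ?_, hconv⟩
    exact hβ0.comp hφ.tendsto_atTop
  -- choose near-projections in D
  have hz : ∀ t : ℕ, ∃ z ∈ D, dist (A (u t)) z < R + 1 := by
    intro t
    apply (Metric.infDist_lt_iff hDne).1
    calc Metric.infDist (A (u t)) D ≤ R := (hu t).2
      _ < R + 1 := by linarith
  choose z hzD hzdist using hz
  have hAx : A x ∈ horizonCone D := by
    refine ⟨z ∘ φ, β ∘ φ, fun t => hzD (φ t), fun t => hβpos (φ t),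
      hβ0.comp hφ.tendsto_atTop, ?_⟩
    have h1 : Tendsto (fun t => A (β (φ t) • u (φ t))) atTop (𝓝 (A x)) :=
      (A.continuous.tendsto x).comp hconv
    have h2 : Tendsto (fun t => β (φ t) • (A (u (φ t)) - z (φ t))) atTop
        (𝓝 (0 : EuclideanSpace ℝ (Fin m))) := by
      have hlim : Tendsto (fun t : ℕ => β (φ t) * (R + 1)) atTop (𝓝 0) := by
        have := (hβ0.comp hφ.tendsto_atTop).mul_const (R + 1)
        simpa using this
      refine squeeze_zero_norm (fun t => ?_) hlim
      rw [norm_smul, Real.norm_eq_abs, abs_of_pos (hβpos (φ t))]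
      have := (hzdist (φ t)).le
      rw [dist_eq_norm] at this
      exact mul_le_mul_of_nonneg_left this (hβpos (φ t)).le
    have : Tendsto (fun t => A (β (φ t) • u (φ t)) - β (φ t) • (A (u (φ t)) - z (φ t)))
        atTop (𝓝 (A x - 0)) := h1.sub h2
    simpa [smul_sub, map_smul] using this
  have hx0' := hhor x hxC hAx
  rw [hx0'] at hxsph
  simp at hxsph
end

section
/- Suppose that C and D are in addition convex and that the set C ∩ A⁻¹D = {x ∈ C : Ax ∈ D} is nonempty and bounded. Then C^∞ ∩ A⁻¹(D^∞) = {0}, i.e., the only vector x with x ∈ C^∞ and Ax ∈ D^∞ is x = 0. -/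
open Filter Topology Metric
open scoped RealInnerProductSpace

lemma horizon_add {E : Type*} [NormedAddCommGroup E] [NormedSpace ℝ E] {S : Set E}
    (hconv : Convex ℝ S) (hcl : IsClosed S) {x s : E}
    (hx : x ∈ horizonCone S) (hs : s ∈ S) : s + x ∈ S := by
  obtain ⟨u, β, hu, hβpos, hβ0, hlim⟩ := hx
  have h1 : ∀ᶠ t in atTop, β t ≤ 1 := by
    have := hβ0.eventually (eventually_le_nhds (by norm_num : (0:ℝ) < 1))
    exact this
  have hmem : ∀ᶠ t in atTop, (1 - β t) • s + β t • u t ∈ S := by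
    filter_upwards [h1] with t ht
    exact hconv hs (hu t) (by linarith [(hβpos t).le]) (hβpos t).le (by ring)
  have hlim2 : Tendsto (fun t => (1 - β t) • s + β t • u t) atTop (𝓝 (s + x)) := by
    have : Tendsto (fun t => (1 - β t) • s) atTop (𝓝 ((1 - (0:ℝ)) • s)) :=
      ((tendsto_const_nhds.sub hβ0).smul tendsto_const_nhds)
    simpa using this.add hlim
  exact hcl.mem_of_tendsto hlim2 hmem

/-- If `C` and `D` are in addition convex and `C ∩ A⁻¹D` is nonempty and
bounded, then `C^∞ ∩ A⁻¹(D^∞) = {0}`. -/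
theorem stmt_1 (n m : ℕ)
    (A : EuclideanSpace ℝ (Fin n) →L[ℝ] EuclideanSpace ℝ (Fin m))
    (C : Set (EuclideanSpace ℝ (Fin n))) (D : Set (EuclideanSpace ℝ (Fin m)))
    (hCne : C.Nonempty) (hCcl : IsClosed C) (hDne : D.Nonempty) (hDcl : IsClosed D)
    (hCconv : Convex ℝ C) (hDconv : Convex ℝ D)
    (hne : {x | x ∈ C ∧ A x ∈ D}.Nonempty)
    (hbd : Bornology.IsBounded {x | x ∈ C ∧ A x ∈ D}) :
    ∀ x, x ∈ horizonCone C → A x ∈ horizonCone D → x = 0 := by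
  intro x hxC hxD
  obtain ⟨c, hcC, hcD⟩ := hne
  have key : ∀ k : ℕ, c + (k : ℝ) • x ∈ C ∧ A (c + (k : ℝ) • x) ∈ D := by
    intro k
    induction k with
    | zero => simpa using ⟨hcC, hcD⟩
    | succ k ih =>
      have hC : (c + (k : ℝ) • x) + x ∈ C := horizon_add hCconv hCcl hxC ih.1
      have hD : A (c + (k : ℝ) • x) + A x ∈ D := horizon_add hDconv hDcl hxD ih.2
      constructor
      · have : c + ((k : ℝ) + 1) • x = (c + (k : ℝ) • x) + x := by
          rw [add_smul, one_smul]; abel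
        rw [Nat.cast_succ, this]; exact hC
      · have : c + ((k : ℝ) + 1) • x = (c + (k : ℝ) • x) + x := by
          rw [add_smul, one_smul]; abel
        rw [Nat.cast_succ, this, map_add]; exact hD
  obtain ⟨R, hR⟩ := hbd.exists_norm_le
  by_contra hx0
  have hxn : 0 < ‖x‖ := norm_pos_iff.mpr hx0
  obtain ⟨k, hk⟩ := exists_nat_gt ((R + ‖c‖) / ‖x‖)
  have hmem := key k
  have hRk := hR _ ⟨hmem.1, hmem.2⟩
  have h1 : (k : ℝ) * ‖x‖ - ‖c‖ ≤ ‖c + (k : ℝ) • x‖ := by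
    have := norm_sub_norm_le ((k : ℝ) • x) (-c)
    simp only [norm_neg, norm_smul, Real.norm_natCast] at this
    calc (k : ℝ) * ‖x‖ - ‖c‖ ≤ ‖(k : ℝ) • x - -c‖ := by
          simpa [norm_smul] using this
      _ = ‖c + (k : ℝ) • x‖ := by rw [sub_neg_eq_add, add_comm]
  have h2 : (k : ℝ) * ‖x‖ ≤ R + ‖c‖ := by linarith
  have h3 : (R + ‖c‖) / ‖x‖ < (k : ℝ) := hk
  rw [div_lt_iff₀ hxn] at h3
  linarith
end

section
/- Let L > 0 and x ∈ C. Let η ∈ Proj_D(Ax) and let u ∈ Proj_C(x − Aᵀ(Ax − η)/L). Then ½ d(Au, D)² ≤ ½ d(Ax, D)² − ((L − ‖A‖²)/2)·‖u − x‖². -/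
open Filter Topology Metric
open scoped RealInnerProductSpace

/-- Sufficient descent for one projected step (general closed `C`):
if `x ∈ C`, `η ∈ Proj_D(Ax)` and `u ∈ Proj_C(x − Aᵀ(Ax − η)/L)`, then
`½ d(Au, D)² ≤ ½ d(Ax, D)² − ((L − ‖A‖²)/2)‖u − x‖²`. -/
theorem stmt_4 (n m : ℕ)
    (A : EuclideanSpace ℝ (Fin n) →L[ℝ] EuclideanSpace ℝ (Fin m))
    (C : Set (EuclideanSpace ℝ (Fin n))) (D : Set (EuclideanSpace ℝ (Fin m)))
    (hCne : C.Nonempty) (hCcl : IsClosed C) (hDne : D.Nonempty) (hDcl : IsClosed D)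
    (L : ℝ) (hL : 0 < L) (x : EuclideanSpace ℝ (Fin n)) (hx : x ∈ C)
    (η : EuclideanSpace ℝ (Fin m)) (hη : η ∈ projSet D (A x))
    (u : EuclideanSpace ℝ (Fin n))
    (hu : u ∈ projSet C (x - L⁻¹ • ((ContinuousLinearMap.adjoint A) (A x - η)))) :
    Metric.infDist (A u) D ^ 2 / 2 ≤
      Metric.infDist (A x) D ^ 2 / 2 - (L - ‖A‖ ^ 2) / 2 * ‖u - x‖ ^ 2 := by
  obtain ⟨hηD, hηd⟩ := hη
  obtain ⟨huC, hud⟩ := hu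
  set g := (ContinuousLinearMap.adjoint A) (A x - η) with hg
  set p := x - L⁻¹ • g with hp
  have h1 : ‖u - p‖ ≤ ‖x - p‖ := by
    rw [← dist_eq_norm, ← dist_eq_norm, dist_comm u p, dist_comm x p, hud]
    exact Metric.infDist_le_dist_of_mem hx
  have hux : u - p = (u - x) + L⁻¹ • g := by rw [hp]; abel
  have hxp : x - p = L⁻¹ • g := by rw [hp]; abel
  have h2 : ‖(u - x) + L⁻¹ • g‖ ^ 2 ≤ ‖L⁻¹ • g‖ ^ 2 := by
    rw [← hux, ← hxp]; exact pow_le_pow_left₀ (norm_nonneg _) h1 2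
  rw [norm_add_sq_real, real_inner_smul_right] at h2
  have key : ⟪u - x, g⟫ ≤ -(L / 2) * ‖u - x‖ ^ 2 := by
    have h3 : ‖u - x‖ ^ 2 + 2 * (L⁻¹ * ⟪u - x, g⟫) ≤ 0 := by linarith
    have h4 := mul_le_mul_of_nonneg_left h3 hL.le
    have h5 : L * L⁻¹ = 1 := mul_inv_cancel₀ hL.ne'
    have h6 : L * (‖u - x‖ ^ 2 + 2 * (L⁻¹ * ⟪u - x, g⟫)) =
        L * ‖u - x‖ ^ 2 + 2 * (L * L⁻¹) * ⟪u - x, g⟫ := by ring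
    rw [h6, h5] at h4
    linarith
  have hinner : ⟪u - x, g⟫ = ⟪A (u - x), A x - η⟫ :=
    ContinuousLinearMap.adjoint_inner_right A (u - x) (A x - η)
  have hd1 : Metric.infDist (A u) D ≤ ‖A u - η‖ := by
    rw [← dist_eq_norm]; exact Metric.infDist_le_dist_of_mem hηD
  have hsq : Metric.infDist (A u) D ^ 2 ≤ ‖A u - η‖ ^ 2 :=
    pow_le_pow_left₀ Metric.infDist_nonneg hd1 2
  have hexp : A u - η = A (u - x) + (A x - η) := by rw [map_sub]; abel
  have hnAx : ‖A x - η‖ = Metric.infDist (A x) D := by rw [← dist_eq_norm]; exact hηd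
  rw [hexp, norm_add_sq_real, hnAx] at hsq
  have hA2 : ‖A (u - x)‖ ^ 2 ≤ ‖A‖ ^ 2 * ‖u - x‖ ^ 2 := by
    have := A.le_opNorm (u - x)
    nlinarith [norm_nonneg (A (u - x)), norm_nonneg (u - x), norm_nonneg A]
  nlinarith
end

section
/- Suppose in addition that C is convex. Let L > 0 and x ∈ C. Let η ∈ Proj_D(Ax) and let u = Proj_C(x − Aᵀ(Ax − η)/L) (the projection onto the closed convex set C). Then ½ d(Au, D)² ≤ ½ d(Ax, D)² − ((2L − ‖A‖²)/2)·‖u − x‖². -/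
open Filter Topology Metric
open scoped RealInnerProductSpace

/-!
The projection inequality for `u = Proj_C(x - L⁻¹ Aᵀ(Ax - η))`, tested against `x ∈ C`, gives
`L‖x - u‖² ≤ ⟪Aᵀ(Ax - η), x - u⟫`. Expanding `‖Au - η‖² = ‖(Ax - η) - A(x - u)‖²` and bounding
`‖A(x - u)‖ ≤ ‖A‖‖x - u‖` turns this into the descent inequality for `‖Au - η‖²`; finally
`d(Au, D) ≤ ‖Au - η‖` since `η ∈ D`, while `d(Ax, D) = ‖Ax - η‖`.
-/

section ProjectedGradient

variable {E F : Type*} [NormedAddCommGroup E] [InnerProductSpace ℝ E]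
  [NormedAddCommGroup F] [InnerProductSpace ℝ F]

theorem real_inner_sub_sub_nonpos_of_mem_projSet {C : Set E} (hC : Convex ℝ C) {y z w : E}
    (hz : z ∈ projSet C y) (hw : w ∈ C) : ⟪y - z, w - z⟫ ≤ 0 := by
  obtain ⟨hzC, hzd⟩ := hz
  refine (norm_eq_iInf_iff_real_inner_le_zero hC hzC).mp ?_ w hw
  simpa [infDist_eq_iInf, dist_eq_norm] using hzd

theorem mul_norm_sub_sq_le_inner_of_mem_projSet {C : Set E} (hC : Convex ℝ C) {x u g : E}
    {L : ℝ} (hL : 0 < L) (hx : x ∈ C) (hu : u ∈ projSet C (x - L⁻¹ • g)) :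
    L * ‖x - u‖ ^ 2 ≤ ⟪g, x - u⟫ := by
  have h := real_inner_sub_sub_nonpos_of_mem_projSet hC hu hx
  rw [show x - L⁻¹ • g - u = (x - u) - L⁻¹ • g by abel, inner_sub_left, real_inner_smul_left,
    real_inner_self_eq_norm_sq] at h
  have h' : ‖x - u‖ ^ 2 ≤ L⁻¹ * ⟪g, x - u⟫ := by linarith
  calc L * ‖x - u‖ ^ 2 ≤ L * (L⁻¹ * ⟪g, x - u⟫) := mul_le_mul_of_nonneg_left h' hL.le
    _ = ⟪g, x - u⟫ := by field_simp

theorem norm_apply_sub_sq_le [CompleteSpace E] [CompleteSpace F] (A : E →L[ℝ] F) (x u : E)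
    (η : F) :
    ‖A u - η‖ ^ 2 ≤
      ‖A x - η‖ ^ 2 - 2 * ⟪ContinuousLinearMap.adjoint A (A x - η), x - u⟫ +
        ‖A‖ ^ 2 * ‖x - u‖ ^ 2 := by
  have hsplit : A u - η = (A x - η) - A (x - u) := by rw [map_sub]; abel
  have hop : ‖A (x - u)‖ ^ 2 ≤ ‖A‖ ^ 2 * ‖x - u‖ ^ 2 := by
    rw [← mul_pow]
    exact pow_le_pow_left₀ (norm_nonneg _) (A.le_opNorm _) 2
  rw [hsplit, norm_sub_sq_real, ContinuousLinearMap.adjoint_inner_left]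
  linarith

end ProjectedGradient

theorem stmt_5_general (n m : ℕ)
    (A : EuclideanSpace ℝ (Fin n) →L[ℝ] EuclideanSpace ℝ (Fin m))
    (C : Set (EuclideanSpace ℝ (Fin n))) (D : Set (EuclideanSpace ℝ (Fin m)))
    (hCconv : Convex ℝ C)
    (L : ℝ) (hL : 0 < L) (x : EuclideanSpace ℝ (Fin n)) (hx : x ∈ C)
    (η : EuclideanSpace ℝ (Fin m)) (hη : η ∈ projSet D (A x))
    (u : EuclideanSpace ℝ (Fin n))
    (hu : u ∈ projSet C (x - L⁻¹ • ((ContinuousLinearMap.adjoint A) (A x - η)))) :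
    Metric.infDist (A u) D ^ 2 / 2 ≤
      Metric.infDist (A x) D ^ 2 / 2 - (2 * L - ‖A‖ ^ 2) / 2 * ‖u - x‖ ^ 2 := by
  obtain ⟨hηD, hηd⟩ := hη
  have hstep := mul_norm_sub_sq_le_inner_of_mem_projSet hCconv hL hx hu
  have hdescent := norm_apply_sub_sq_le A x u η
  have hAu : infDist (A u) D ≤ ‖A u - η‖ := by
    simpa [dist_eq_norm] using infDist_le_dist_of_mem hηD
  have hAx : infDist (A x) D = ‖A x - η‖ := by rw [← hηd, dist_eq_norm]
  rw [hAx, norm_sub_rev u x]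
  nlinarith [infDist_nonneg (x := A u) (s := D)]

/-- Sufficient descent for one projected step when `C` is in addition convex:
if `x ∈ C`, `η ∈ Proj_D(Ax)` and `u = Proj_C(x − Aᵀ(Ax − η)/L)`, then
`½ d(Au, D)² ≤ ½ d(Ax, D)² − ((2L − ‖A‖²)/2)‖u − x‖²`. -/
theorem stmt_5 (n m : ℕ)
    (A : EuclideanSpace ℝ (Fin n) →L[ℝ] EuclideanSpace ℝ (Fin m))
    (C : Set (EuclideanSpace ℝ (Fin n))) (D : Set (EuclideanSpace ℝ (Fin m)))
    (hCne : C.Nonempty) (hCcl : IsClosed C) (hCconv : Convex ℝ C)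
    (hDne : D.Nonempty) (hDcl : IsClosed D)
    (L : ℝ) (hL : 0 < L) (x : EuclideanSpace ℝ (Fin n)) (hx : x ∈ C)
    (η : EuclideanSpace ℝ (Fin m)) (hη : η ∈ projSet D (A x))
    (u : EuclideanSpace ℝ (Fin n))
    (hu : u ∈ projSet C (x - L⁻¹ • ((ContinuousLinearMap.adjoint A) (A x - η)))) :
    Metric.infDist (A u) D ^ 2 / 2 ≤
      Metric.infDist (A x) D ^ 2 / 2 - (2 * L - ‖A‖ ^ 2) / 2 * ‖u - x‖ ^ 2 :=
  stmt_5_general n m A C D hCconv L hL x hx η hη u hu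
end

section
/- Let r_C = 2 if C is convex and r_C = 1 otherwise, and let L > ‖A‖²/r_C. Let x⁰ ∈ C and let {x^t} be any sequence such that for every t ≥ 0 there exists η^t ∈ Proj_D(Ax^t) with x^{t+1} ∈ Proj_C(x^t − Aᵀ(Ax^t − η^t)/L) (the fixed-stepsize algorithm SpFeas_DC). Then the sequence t ↦ d(Ax^t, D) is nonincreasing, the series ∑_{t=0}^∞ ‖x^{t+1} − x^t‖² converges, and in particular ‖x^{t+1} − x^t‖ → 0 as t → ∞. -/
open Filter Topology Metric
open scoped RealInnerProductSpace

set_option maxHeartbeats 1000000 in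
/-- For the fixed-stepsize algorithm `SpFeas_DC` with `L > ‖A‖²/r_C`
(`r_C = 2` if `C` is convex, `r_C = 1` otherwise), the distances `d(Ax^t, D)` are
nonincreasing, `∑ ‖x^{t+1} − x^t‖²` converges, and `‖x^{t+1} − x^t‖ → 0`. -/
theorem stmt_6 (n m : ℕ)
    (A : EuclideanSpace ℝ (Fin n) →L[ℝ] EuclideanSpace ℝ (Fin m))
    (C : Set (EuclideanSpace ℝ (Fin n))) (D : Set (EuclideanSpace ℝ (Fin m)))
    (hCne : C.Nonempty) (hCcl : IsClosed C) (hDne : D.Nonempty) (hDcl : IsClosed D)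
    (rC L : ℝ) (hrC : (Convex ℝ C ∧ rC = 2) ∨ (¬ Convex ℝ C ∧ rC = 1))
    (hL : ‖A‖ ^ 2 / rC < L)
    (x : ℕ → EuclideanSpace ℝ (Fin n)) (hx0 : x 0 ∈ C)
    (hstep : ∀ t : ℕ, ∃ η ∈ projSet D (A (x t)),
      x (t + 1) ∈ projSet C (x t - L⁻¹ • ((ContinuousLinearMap.adjoint A) (A (x t) - η)))) :
    Antitone (fun t => Metric.infDist (A (x t)) D) ∧
    Summable (fun t => ‖x (t + 1) - x t‖ ^ 2) ∧
    Tendsto (fun t => ‖x (t + 1) - x t‖) atTop (𝓝 0) := by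
  have hrCpos : 0 < rC := by rcases hrC with ⟨_, h⟩ | ⟨_, h⟩ <;> rw [h] <;> norm_num
  have hrC1 : 1 ≤ rC := by rcases hrC with ⟨_, h⟩ | ⟨_, h⟩ <;> rw [h] <;> norm_num
  have hAL : ‖A‖ ^ 2 < rC * L := by
    have := (div_lt_iff₀ hrCpos).mp hL
    linarith
  have hLpos : 0 < L := by
    have h0 : (0:ℝ) ≤ ‖A‖ ^ 2 := sq_nonneg _
    nlinarith
  set c : ℝ := rC * L - ‖A‖ ^ 2 with hc
  have hcpos : 0 < c := by linarith
  -- all iterates in C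
  have hmem : ∀ t, x t ∈ C := by
    intro t
    induction t with
    | zero => exact hx0
    | succ t _ =>
      obtain ⟨η, hη, hp⟩ := hstep t
      exact hp.1
  -- key descent inequality
  have key : ∀ t, Metric.infDist (A (x (t+1))) D ^ 2 + c * ‖x (t+1) - x t‖ ^ 2 ≤
      Metric.infDist (A (x t)) D ^ 2 := by
    intro t
    obtain ⟨η, hη, hp⟩ := hstep t
    set y := x t - L⁻¹ • ((ContinuousLinearMap.adjoint A) (A (x t) - η)) with hy
    set p := x (t + 1)
    set Δ := p - x t with hΔ
    have hηD : η ∈ D := hη.1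
    have hd0 : Metric.infDist (A (x t)) D = ‖A (x t) - η‖ := by
      rw [← hη.2, dist_eq_norm]
    have hpC : p ∈ C := hp.1
    -- distance at next iterate bounded by distance to η
    have hnext : Metric.infDist (A p) D ≤ ‖A p - η‖ := by
      rw [← dist_eq_norm]
      exact Metric.infDist_le_dist_of_mem hηD
    -- expansion of ‖A p - η‖²
    have hexp : ‖A p - η‖ ^ 2 = ‖A (x t) - η‖ ^ 2
        + 2 * ⟪A (x t) - η, A Δ⟫ + ‖A Δ‖ ^ 2 := by
      have h1 : A p - η = (A (x t) - η) + A Δ := by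
        rw [hΔ, map_sub]; abel
      rw [h1, norm_add_sq_real]
    -- adjoint identity
    have hadj : ⟪A (x t) - η, A Δ⟫ =
        ⟪(ContinuousLinearMap.adjoint A) (A (x t) - η), Δ⟫ := by
      rw [ContinuousLinearMap.adjoint_inner_left]
    have hxy : (ContinuousLinearMap.adjoint A) (A (x t) - η) = L • (x t - y) := by
      rw [hy]; rw [sub_sub_cancel, smul_smul, mul_inv_cancel₀ hLpos.ne', one_smul]
    have hinner : 2 * ⟪A (x t) - η, A Δ⟫ =
        L * (‖y - p‖ ^ 2 - ‖y - x t‖ ^ 2 - ‖Δ‖ ^ 2) := by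
      rw [hadj, hxy, real_inner_smul_left]
      have h2 : ‖y - p‖ ^ 2 = ‖y - x t‖ ^ 2 + 2 * ⟪y - x t, -Δ⟫ + ‖Δ‖ ^ 2 := by
        have : y - p = (y - x t) + (-Δ) := by rw [hΔ]; abel
        rw [this, norm_add_sq_real, norm_neg]
      have h3 : ⟪y - x t, -Δ⟫ = - ⟪y - x t, Δ⟫ := by rw [inner_neg_right]
      have h4 : ⟪x t - y, Δ⟫ = - ⟪y - x t, Δ⟫ := by
        rw [show x t - y = -(y - x t) by abel, inner_neg_left]
      rw [h3] at h2
      rw [h4]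
      linear_combination (-L) * h2
    -- case analysis on convexity
    have hcase : L * (‖y - p‖ ^ 2 - ‖y - x t‖ ^ 2) ≤ -((rC - 1) * L * ‖Δ‖ ^ 2) := by
      rcases hrC with ⟨hconv, hrc2⟩ | ⟨_, hrc1⟩
      · -- convex: obtuse angle property
        have hproj : ‖y - p‖ = ⨅ w : C, ‖y - ↑w‖ := by
          have := hp.2
          rw [dist_eq_norm] at this
          rw [this, Metric.infDist_eq_iInf]
          simp only [dist_eq_norm]
        have hobt : ⟪y - p, x t - p⟫ ≤ 0 :=
          ((norm_eq_iInf_iff_real_inner_le_zero hconv hpC).mp hproj) (x t) (hmem t)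
        have hin : 0 ≤ ⟪y - p, Δ⟫ := by
          have : ⟪y - p, x t - p⟫ = - ⟪y - p, Δ⟫ := by
            rw [show x t - p = -Δ by rw [hΔ]; abel, inner_neg_right]
          linarith
        have hsq : ‖y - x t‖ ^ 2 = ‖y - p‖ ^ 2 + 2 * ⟪y - p, Δ⟫ + ‖Δ‖ ^ 2 := by
          have h5 : y - x t = (y - p) + Δ := by rw [hΔ]; abel
          rw [h5, norm_add_sq_real]
        have he : ‖y - p‖ ^ 2 - ‖y - x t‖ ^ 2 ≤ -(‖Δ‖ ^ 2) := by linarith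
        have := mul_le_mul_of_nonneg_left he hLpos.le
        rw [hrc2]
        linarith
      · -- nonconvex: just minimality
        have hle : ‖y - p‖ ≤ ‖y - x t‖ := by
          have h6 : dist y p = Metric.infDist y C := hp.2
          have h7 : Metric.infDist y C ≤ dist y (x t) :=
            Metric.infDist_le_dist_of_mem (hmem t)
          rw [dist_eq_norm] at h6 h7
          linarith
        have : ‖y - p‖ ^ 2 ≤ ‖y - x t‖ ^ 2 := by
          nlinarith [norm_nonneg (y - p), norm_nonneg (y - x t)]
        have he : ‖y - p‖ ^ 2 - ‖y - x t‖ ^ 2 ≤ 0 := by linarith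
        have := mul_le_mul_of_nonneg_left he hLpos.le
        rw [hrc1]
        simp only [sub_self, zero_mul, neg_zero]
        linarith
    have hop : ‖A Δ‖ ^ 2 ≤ ‖A‖ ^ 2 * ‖Δ‖ ^ 2 := by
      calc ‖A Δ‖ ^ 2 ≤ (‖A‖ * ‖Δ‖) ^ 2 := by
            apply pow_le_pow_left₀ (norm_nonneg _) (A.le_opNorm Δ)
        _ = ‖A‖ ^ 2 * ‖Δ‖ ^ 2 := by ring
    have hfinal : ‖A p - η‖ ^ 2 ≤ ‖A (x t) - η‖ ^ 2 - c * ‖Δ‖ ^ 2 := by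
      rw [hexp]
      have h11 : 2 * ⟪A (x t) - η, A Δ⟫ ≤ -((rC - 1) * L * ‖Δ‖ ^ 2) - L * ‖Δ‖ ^ 2 := by
        rw [hinner]
        have : L * (‖y - p‖ ^ 2 - ‖y - x t‖ ^ 2 - ‖Δ‖ ^ 2)
            = L * (‖y - p‖ ^ 2 - ‖y - x t‖ ^ 2) - L * ‖Δ‖ ^ 2 := by ring
        rw [this]
        linarith
      have h12 : c * ‖Δ‖ ^ 2 = -(-((rC - 1) * L * ‖Δ‖ ^ 2) - L * ‖Δ‖ ^ 2) - ‖A‖ ^ 2 * ‖Δ‖ ^ 2 := by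
        rw [hc]; ring
      linarith
    have hsqle : Metric.infDist (A p) D ^ 2 ≤ ‖A p - η‖ ^ 2 :=
      pow_le_pow_left₀ Metric.infDist_nonneg hnext 2
    rw [hd0]
    calc Metric.infDist (A p) D ^ 2 + c * ‖Δ‖ ^ 2
        ≤ ‖A p - η‖ ^ 2 + c * ‖Δ‖ ^ 2 := by linarith
      _ ≤ ‖A (x t) - η‖ ^ 2 := by linarith
  -- conclusions
  have hdn : ∀ t, 0 ≤ Metric.infDist (A (x t)) D := fun t => Metric.infDist_nonneg
  have hanti : Antitone (fun t => Metric.infDist (A (x t)) D) := by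
    apply antitone_nat_of_succ_le
    intro t
    have hk := key t
    have h9 : Metric.infDist (A (x (t+1))) D ^ 2 ≤ Metric.infDist (A (x t)) D ^ 2 := by
      have := mul_le_mul_of_nonneg_left (sq_nonneg ‖x (t+1) - x t‖) hcpos.le
      simp only [mul_zero] at this
      linarith
    have h10 := Real.sqrt_le_sqrt h9
    rwa [Real.sqrt_sq (hdn _), Real.sqrt_sq (hdn _)] at h10
  -- partial sums bounded
  have hpartial : ∀ N, ∑ t ∈ Finset.range N, c * ‖x (t+1) - x t‖ ^ 2 ≤
      Metric.infDist (A (x 0)) D ^ 2 := by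
    intro N
    have : ∀ N, ∑ t ∈ Finset.range N, c * ‖x (t+1) - x t‖ ^ 2
        + Metric.infDist (A (x N)) D ^ 2 ≤ Metric.infDist (A (x 0)) D ^ 2 := by
      intro N
      induction N with
      | zero => simp
      | succ N ih =>
        rw [Finset.sum_range_succ]
        have := key N
        linarith
    have h10 := this N
    nlinarith [sq_nonneg (Metric.infDist (A (x N)) D)]
  have hsumc : Summable (fun t => c * ‖x (t+1) - x t‖ ^ 2) :=
    summable_of_sum_range_le (fun t => by positivity) hpartial
  have hsum : Summable (fun t => ‖x (t+1) - x t‖ ^ 2) := by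
    have := hsumc.mul_left c⁻¹
    simpa [← mul_assoc, inv_mul_cancel₀ hcpos.ne'] using this
  refine ⟨hanti, hsum, ?_⟩
  have hsq0 : Tendsto (fun t => ‖x (t+1) - x t‖ ^ 2) atTop (𝓝 0) :=
    hsum.tendsto_atTop_zero
  have := hsq0.sqrt
  simpa [Real.sqrt_sq (norm_nonneg _)] using this
end

section
/- Suppose C^∞ ∩ A⁻¹(D^∞) = {0}. Let r_C = 2 if C is convex and r_C = 1 otherwise, and let L > ‖A‖²/r_C. Let x⁰ ∈ C and let {x^t} be any sequence such that for every t ≥ 0 there exists η^t ∈ Proj_D(Ax^t) with x^{t+1} ∈ Proj_C(x^t − Aᵀ(Ax^t − η^t)/L) (the fixed-stepsize algorithm SpFeas_DC). Then the sequence {x^t} is bounded. -/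
/-!
A projected-gradient step on `x ↦ ½ d(Ax, D)²` over `C`, with stepsize `1/L`, moves `x` to a point
`p` satisfying `r_C ‖x - p‖² ≤ (2/L) ⟪Aᵀ(Ax - η), x - p⟫`; since `½ d(A·, D)²` is majorized by
the quadratic `½ ‖A· - η‖²`, of curvature at most `‖A‖² < r_C L`, this makes `d(Ax^t, D)`
nonincreasing. Hence every iterate lies in the sublevel set `{z ∈ C | d(Az, D) ≤ d(Ax⁰, D)}`.
An unbounded set has a nonzero direction in its horizon cone; for this sublevel set such a
direction `w` lies in `C^∞` and has `Aw ∈ D^∞`, because `Az` stays within bounded distance of `D`.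
-/

open Filter Topology Metric
open scoped RealInnerProductSpace

open Bornology

section Projection

variable {E : Type*} [NormedAddCommGroup E] [InnerProductSpace ℝ E] {S : Set E} {x v p : E}

lemma norm_sub_sq_le_two_inner_of_mem_projSet (hx : x ∈ S) (hp : p ∈ projSet S (x - v)) :
    ‖x - p‖ ^ 2 ≤ 2 * ⟪v, x - p⟫ := by
  have hle : ‖(x - p) - v‖ ≤ ‖v‖ := by
    calc ‖(x - p) - v‖ = dist (x - v) p := by rw [dist_eq_norm]; abel_nf
      _ = infDist (x - v) S := hp.2
      _ ≤ dist (x - v) x := infDist_le_dist_of_mem hx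
      _ = ‖v‖ := by rw [dist_eq_norm, sub_sub_cancel_left, norm_neg]
  have hsq := pow_le_pow_left₀ (norm_nonneg _) hle 2
  rw [norm_sub_sq_real, real_inner_comm v (x - p)] at hsq
  linarith

lemma Convex.norm_sub_sq_le_inner_of_mem_projSet (hS : Convex ℝ S) (hx : x ∈ S)
    (hp : p ∈ projSet S (x - v)) : ‖x - p‖ ^ 2 ≤ ⟪v, x - p⟫ := by
  have hmin : ‖(x - v) - p‖ = ⨅ w : S, ‖(x - v) - w‖ := by
    simp_rw [← dist_eq_norm]
    rw [hp.2, infDist_eq_iInf]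
  have hobtuse := (norm_eq_iInf_iff_real_inner_le_zero hS hp.1).mp hmin x hx
  rw [show x - v - p = (x - p) - v by abel, inner_sub_left, real_inner_self_eq_norm_sq] at hobtuse
  linarith [real_inner_comm v (x - p)]

lemma mul_norm_sub_sq_le_two_inner_of_mem_projSet {r : ℝ} (hr : (Convex ℝ S ∧ r = 2) ∨ r = 1)
    (hx : x ∈ S) (hp : p ∈ projSet S (x - v)) : r * ‖x - p‖ ^ 2 ≤ 2 * ⟪v, x - p⟫ := by
  rcases hr with ⟨hS, rfl⟩ | rfl
  · linarith [hS.norm_sub_sq_le_inner_of_mem_projSet hx hp]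
  · linarith [norm_sub_sq_le_two_inner_of_mem_projSet hx hp]

end Projection

section Descent

variable {E F : Type*} [NormedAddCommGroup E] [InnerProductSpace ℝ E] [CompleteSpace E]
  [NormedAddCommGroup F] [InnerProductSpace ℝ F] [CompleteSpace F]
  {A : E →L[ℝ] F} {C : Set E} {D : Set F} {r L : ℝ} {x p : E} {η : F}

lemma infDist_sq_add_le_of_mem_projSet (hr : (Convex ℝ C ∧ r = 2) ∨ r = 1) (hL : 0 < L)
    (hx : x ∈ C) (hη : η ∈ projSet D (A x))
    (hp : p ∈ projSet C (x - L⁻¹ • ContinuousLinearMap.adjoint A (A x - η))) :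
    infDist (A p) D ^ 2 + (r * L - ‖A‖ ^ 2) * ‖x - p‖ ^ 2 ≤ infDist (A x) D ^ 2 := by
  have hproj := mul_norm_sub_sq_le_two_inner_of_mem_projSet hr hx hp
  rw [real_inner_smul_left, ContinuousLinearMap.adjoint_inner_left] at hproj
  have hdecrease : r * L * ‖x - p‖ ^ 2 ≤ 2 * ⟪A x - η, A (x - p)⟫ := by
    have := mul_le_mul_of_nonneg_left hproj hL.le
    field_simp at this
    linarith
  have hAxη : ‖A x - η‖ = infDist (A x) D := by rw [← dist_eq_norm]; exact hη.2
  have hApη : infDist (A p) D ≤ ‖(A x - η) - A (x - p)‖ := by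
    rw [map_sub, sub_sub_sub_cancel_left, ← dist_eq_norm]
    exact infDist_le_dist_of_mem hη.1
  have hAnorm : ‖A (x - p)‖ ^ 2 ≤ ‖A‖ ^ 2 * ‖x - p‖ ^ 2 := by
    rw [← mul_pow]; exact pow_le_pow_left₀ (norm_nonneg _) (A.le_opNorm _) 2
  have hsq := pow_le_pow_left₀ infDist_nonneg hApη 2
  rw [norm_sub_sq_real, hAxη] at hsq
  linarith

lemma infDist_le_of_mem_projSet (hr : (Convex ℝ C ∧ r = 2) ∨ r = 1) (hL : ‖A‖ ^ 2 / r < L)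
    (hx : x ∈ C) (hη : η ∈ projSet D (A x))
    (hp : p ∈ projSet C (x - L⁻¹ • ContinuousLinearMap.adjoint A (A x - η))) :
    infDist (A p) D ≤ infDist (A x) D := by
  have hr0 : 0 < r := by rcases hr with ⟨_, rfl⟩ | rfl <;> norm_num
  have hgap : 0 ≤ r * L - ‖A‖ ^ 2 := by rw [div_lt_iff₀' hr0] at hL; linarith
  have hL0 : 0 < L := lt_of_le_of_lt (by positivity) hL
  have hdesc := infDist_sq_add_le_of_mem_projSet hr hL0 hx hη hp
  have hsq : infDist (A p) D ^ 2 ≤ infDist (A x) D ^ 2 := by nlinarith [sq_nonneg ‖x - p‖]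
  exact (pow_le_pow_iff_left₀ infDist_nonneg infDist_nonneg two_ne_zero).mp hsq

end Descent

section HorizonCone

variable {E F : Type*} [NormedAddCommGroup E] [NormedSpace ℝ E]
  [NormedAddCommGroup F] [NormedSpace ℝ F]

lemma horizonCone_mono {S T : Set E} (h : S ⊆ T) : horizonCone S ⊆ horizonCone T :=
  fun _ ⟨u, β, hu, hβ⟩ ↦ ⟨u, β, fun t ↦ h (hu t), hβ⟩

lemma isBounded_of_horizonCone_subset_zero [ProperSpace E] {S : Set E}
    (h : horizonCone S ⊆ {0}) : IsBounded S := by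
  by_contra hS
  rw [isBounded_iff_forall_norm_le] at hS
  push Not at hS
  choose u huS hu using fun k : ℕ ↦ hS k
  have hpos : ∀ k, 0 < ‖u k‖ := fun k ↦ (Nat.cast_nonneg k).trans_lt (hu k)
  have hβ : Tendsto (fun k ↦ ‖u k‖⁻¹) atTop (𝓝 0) :=
    tendsto_inv_atTop_zero.comp <|
      tendsto_atTop_mono (fun k ↦ (hu k).le) tendsto_natCast_atTop_atTop
  have hsphere : ∀ k, ‖u k‖⁻¹ • u k ∈ sphere (0 : E) 1 := fun k ↦ by
    rw [mem_sphere_zero_iff_norm, norm_smul, norm_inv, norm_norm, inv_mul_cancel₀ (hpos k).ne']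
  obtain ⟨w, hw, φ, hφ, hlim⟩ := (isCompact_sphere (0 : E) 1).tendsto_subseq hsphere
  have hw0 : w = 0 := h ⟨u ∘ φ, fun k ↦ ‖u (φ k)‖⁻¹, fun k ↦ huS (φ k),
    fun k ↦ inv_pos.mpr (hpos (φ k)), hβ.comp hφ.tendsto_atTop, hlim⟩
  simp [hw0] at hw

lemma mem_horizonCone_of_infDist_le {D : Set F} (hD : D.Nonempty) {c : ℝ} {y : F}
    {u : ℕ → F} {β : ℕ → ℝ} (hu : ∀ t, infDist (u t) D ≤ c) (hβpos : ∀ t, 0 < β t)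
    (hβ : Tendsto β atTop (𝓝 0)) (hlim : Tendsto (fun t ↦ β t • u t) atTop (𝓝 y)) :
    y ∈ horizonCone D := by
  have hnear : ∀ t, ∃ d ∈ D, dist (u t) d < c + 1 :=
    fun t ↦ (infDist_lt_iff hD).mp ((hu t).trans_lt (lt_add_one c))
  choose d hdD hd using hnear
  have hgap : Tendsto (fun t ↦ β t • (u t - d t)) atTop (𝓝 0) := by
    refine squeeze_zero_norm (fun t ↦ ?_) (by simpa using hβ.mul_const (c + 1))
    rw [norm_smul, Real.norm_of_nonneg (hβpos t).le, ← dist_eq_norm]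
    exact mul_le_mul_of_nonneg_left (hd t).le (hβpos t).le
  refine ⟨d, β, hdD, hβpos, hβ, ?_⟩
  simpa [smul_sub] using hlim.sub hgap

lemma map_mem_horizonCone_of_mem_horizonCone_sublevel (A : E →L[ℝ] F) {D : Set F}
    (hD : D.Nonempty) {c : ℝ} {w : E} (hw : w ∈ horizonCone {z | infDist (A z) D ≤ c}) :
    A w ∈ horizonCone D := by
  obtain ⟨u, β, hu, hβpos, hβ, hlim⟩ := hw
  refine mem_horizonCone_of_infDist_le hD hu hβpos hβ ?_
  simpa only [Function.comp_def, map_smul] using (A.continuous.tendsto w).comp hlim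

end HorizonCone

theorem stmt_7_general (n m : ℕ)
    (A : EuclideanSpace ℝ (Fin n) →L[ℝ] EuclideanSpace ℝ (Fin m))
    (C : Set (EuclideanSpace ℝ (Fin n))) (D : Set (EuclideanSpace ℝ (Fin m)))
    (hDne : D.Nonempty)
    (hhor : ∀ z, z ∈ horizonCone C → A z ∈ horizonCone D → z = 0)
    (rC L : ℝ) (hrC : (Convex ℝ C ∧ rC = 2) ∨ (¬ Convex ℝ C ∧ rC = 1))
    (hL : ‖A‖ ^ 2 / rC < L)
    (x : ℕ → EuclideanSpace ℝ (Fin n)) (hx0 : x 0 ∈ C)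
    (hstep : ∀ t : ℕ, ∃ η ∈ projSet D (A (x t)),
      x (t + 1) ∈ projSet C (x t - L⁻¹ • ((ContinuousLinearMap.adjoint A) (A (x t) - η)))) :
    Bornology.IsBounded (Set.range x) := by
  set T := C ∩ {z | infDist (A z) D ≤ infDist (A (x 0)) D}
  have hr : (Convex ℝ C ∧ rC = 2) ∨ rC = 1 := hrC.imp_right And.right
  have hxT : ∀ t, x t ∈ T := by
    intro t
    induction t with
    | zero => exact ⟨hx0, le_refl (infDist (A (x 0)) D)⟩
    | succ t ih =>
      obtain ⟨η, hη, hp⟩ := hstep t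
      exact ⟨hp.1, (infDist_le_of_mem_projSet hr hL ih.1 hη hp).trans ih.2⟩
  refine (isBounded_of_horizonCone_subset_zero fun w hw ↦ ?_).subset
    (Set.range_subset_iff.mpr hxT)
  exact hhor w (horizonCone_mono Set.inter_subset_left hw)
    (map_mem_horizonCone_of_mem_horizonCone_sublevel A hDne
      (horizonCone_mono Set.inter_subset_right hw))

/-- Under the horizon-cone condition `C^∞ ∩ A⁻¹(D^∞) = {0}`, the sequence
generated by the fixed-stepsize algorithm `SpFeas_DC` is bounded. -/
theorem stmt_7 (n m : ℕ)
    (A : EuclideanSpace ℝ (Fin n) →L[ℝ] EuclideanSpace ℝ (Fin m))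
    (C : Set (EuclideanSpace ℝ (Fin n))) (D : Set (EuclideanSpace ℝ (Fin m)))
    (hCne : C.Nonempty) (hCcl : IsClosed C) (hDne : D.Nonempty) (hDcl : IsClosed D)
    (hhor : ∀ z, z ∈ horizonCone C → A z ∈ horizonCone D → z = 0)
    (rC L : ℝ) (hrC : (Convex ℝ C ∧ rC = 2) ∨ (¬ Convex ℝ C ∧ rC = 1))
    (hL : ‖A‖ ^ 2 / rC < L)
    (x : ℕ → EuclideanSpace ℝ (Fin n)) (hx0 : x 0 ∈ C)
    (hstep : ∀ t : ℕ, ∃ η ∈ projSet D (A (x t)),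
      x (t + 1) ∈ projSet C (x t - L⁻¹ • ((ContinuousLinearMap.adjoint A) (A (x t) - η)))) :
    Bornology.IsBounded (Set.range x) :=
  stmt_7_general n m A C D hDne hhor rC L hrC hL x hx0 hstep
end

section
/- For every x ∈ C, the limiting subdifferential of F at x satisfies the inclusion ∂F(x) ⊆ {AᵀAx − Aᵀη + v : η ∈ Proj_D(Ax), v ∈ N_C(x)} (written ∂F(x) ⊆ AᵀAx − AᵀProj_D(Ax) + N_C(x)). -/
open Filter Topology Metric
open scoped RealInnerProductSpace

open Metric in
lemma reg_step {n m : ℕ} (A : EuclideanSpace ℝ (Fin n) →L[ℝ] EuclideanSpace ℝ (Fin m))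
    (C : Set (EuclideanSpace ℝ (Fin n))) (D : Set (EuclideanSpace ℝ (Fin m)))
    {u : EuclideanSpace ℝ (Fin n)} {η : EuclideanSpace ℝ (Fin m)}
    {v : EuclideanSpace ℝ (Fin n)}
    (hη : η ∈ projSet D (A u)) (hv : v ∈ regSubdiff (phiF A D) C u) :
    v - (ContinuousLinearMap.adjoint A) (A u - η) ∈ regNormalCone C u := by
  obtain ⟨huC, hreg⟩ := hv
  refine ⟨huC, fun ε hε => ?_⟩
  obtain ⟨δ₁, hδ₁, H⟩ := hreg (ε/2) (by positivity)
  refine ⟨min δ₁ (ε/(‖A‖^2+1)), lt_min hδ₁ (by positivity), fun u' hu' hlt => ?_⟩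
  have hlt1 : ‖u' - u‖ < δ₁ := lt_of_lt_of_le hlt (min_le_left _ _)
  have hlt2 : ‖u' - u‖ < ε/(‖A‖^2+1) := lt_of_lt_of_le hlt (min_le_right _ _)
  have hH := H u' hu' hlt1
  have hphiu : phiF A D u = ‖A u - η‖^2/2 := by
    unfold phiF; rw [← hη.2, dist_eq_norm]
  have hub : phiF A D u' ≤ ‖A u' - η‖^2/2 := by
    unfold phiF
    have h1 : infDist (A u') D ≤ ‖A u' - η‖ := by
      rw [← dist_eq_norm]; exact infDist_le_dist_of_mem hη.1
    have h2 := pow_le_pow_left₀ infDist_nonneg h1 2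
    linarith
  have hkey : ‖A u' - η‖^2 = ‖A u - η‖^2 + 2*⟪A u - η, A u' - A u⟫ + ‖A u' - A u‖^2 := by
    have h : A u' - η = (A u - η) + (A u' - A u) := by abel
    rw [h, norm_add_sq_real]
  have hop : ‖A u' - A u‖ ≤ ‖A‖ * ‖u' - u‖ := by
    calc ‖A u' - A u‖ = ‖A (u' - u)‖ := by rw [map_sub]
    _ ≤ ‖A‖ * ‖u' - u‖ := A.le_opNorm _
  have had : ⟪(ContinuousLinearMap.adjoint A) (A u - η), u' - u⟫ = ⟪A u - η, A u' - A u⟫ := by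
    rw [ContinuousLinearMap.adjoint_inner_left, map_sub]
  rw [inner_sub_left, had]
  have hb2 : ‖A u' - A u‖^2 ≤ (‖A‖ * ‖u' - u‖)^2 := pow_le_pow_left₀ (norm_nonneg _) hop 2
  have hr : ‖u' - u‖ * (‖A‖^2+1) < ε := (lt_div_iff₀ (by positivity)).mp hlt2
  have hr2 : (‖u' - u‖ * (‖A‖^2+1)) * ‖u' - u‖ ≤ ε * ‖u' - u‖ :=
    mul_le_mul_of_nonneg_right hr.le (norm_nonneg _)
  nlinarith [norm_nonneg (u' - u), sq_nonneg (‖u' - u‖), hH, hub, hphiu, hkey, hb2, hr2]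

/-- For every `x ∈ C`, the limiting subdifferential of
`F = ½ d(A·, D)² + δ_C` satisfies `∂F(x) ⊆ AᵀAx − AᵀProj_D(Ax) + N_C(x)`. -/
theorem stmt_9 (n m : ℕ)
    (A : EuclideanSpace ℝ (Fin n) →L[ℝ] EuclideanSpace ℝ (Fin m))
    (C : Set (EuclideanSpace ℝ (Fin n))) (D : Set (EuclideanSpace ℝ (Fin m)))
    (hCne : C.Nonempty) (hCcl : IsClosed C) (hDne : D.Nonempty) (hDcl : IsClosed D)
    (x : EuclideanSpace ℝ (Fin n)) (hx : x ∈ C) :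
    ∀ w ∈ limSubdiff (phiF A D) C x,
      ∃ η ∈ projSet D (A x), ∃ v ∈ normalCone C x,
        w = (ContinuousLinearMap.adjoint A) (A x - η) + v := by
  
  intro w hw
  obtain ⟨hxC, xs, vs, hvs, hxs, hphi, hwlim⟩ := hw
  have hproj : ∀ t, ∃ η, η ∈ projSet D (A (xs t)) := fun t => by
    obtain ⟨η, hηD, hηd⟩ := hDcl.exists_infDist_eq_dist hDne (A (xs t))
    exact ⟨η, hηD, hηd.symm⟩
  choose η hη using hproj
  have hA : Tendsto (fun t => A (xs t)) atTop (𝓝 (A x)) := (A.continuous.tendsto x).comp hxs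
  obtain ⟨M, hM⟩ : ∃ M, ∀ t, ‖A (xs t)‖ ≤ M := by
    obtain ⟨r, hr⟩ := (isBounded_range_of_tendsto _ hA).subset_closedBall 0
    exact ⟨r, fun t => by
      simpa [mem_closedBall, dist_eq_norm] using hr (Set.mem_range_self t)⟩
  obtain ⟨d0, hd0⟩ := hDne
  have hbound : ∀ t, η t ∈ Metric.closedBall (0 : EuclideanSpace ℝ (Fin m)) (2*M + ‖d0‖) := by
    intro t
    have h1 : dist (A (xs t)) (η t) ≤ dist (A (xs t)) d0 := by
      rw [(hη t).2]; exact Metric.infDist_le_dist_of_mem hd0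
    have h2 : dist (A (xs t)) d0 ≤ ‖A (xs t)‖ + ‖d0‖ := by
      rw [dist_eq_norm]; exact norm_sub_le _ _
    have h3 : ‖η t‖ ≤ ‖η t - A (xs t)‖ + ‖A (xs t)‖ := by
      simpa using norm_add_le (η t - A (xs t)) (A (xs t))
    have h4 : ‖η t - A (xs t)‖ = dist (A (xs t)) (η t) := by
      rw [dist_eq_norm, norm_sub_rev]
    have := hM t
    rw [Metric.mem_closedBall, dist_zero_right]
    linarith
  obtain ⟨etaL, -, φk, hmono, hconv⟩ :=
    (isCompact_closedBall (0 : EuclideanSpace ℝ (Fin m)) (2*M + ‖d0‖)).tendsto_subseq hbound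
  have hAφ : Tendsto (fun k => A (xs (φk k))) atTop (𝓝 (A x)) := hA.comp hmono.tendsto_atTop
  have hηD : etaL ∈ D :=
    hDcl.mem_of_tendsto hconv (Filter.Eventually.of_forall fun k => (hη _).1)
  have hdist : dist (A x) etaL = Metric.infDist (A x) D := by
    have h1 : Tendsto (fun k => Metric.infDist (A (xs (φk k))) D) atTop
        (𝓝 (dist (A x) etaL)) := Tendsto.congr (fun k => (hη (φk k)).2) (hAφ.dist hconv)
    have h2 : Tendsto (fun k => Metric.infDist (A (xs (φk k))) D) atTop
        (𝓝 (Metric.infDist (A x) D)) :=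
      ((Metric.continuous_infDist_pt D).tendsto (A x)).comp hAφ
    exact tendsto_nhds_unique h1 h2
  have h3 : Tendsto (fun k => (ContinuousLinearMap.adjoint A) (A (xs (φk k)) - η (φk k)))
      atTop (𝓝 ((ContinuousLinearMap.adjoint A) (A x - etaL))) :=
    (((ContinuousLinearMap.adjoint A).continuous.tendsto _)).comp (hAφ.sub hconv)
  refine ⟨etaL, ⟨hηD, hdist⟩, w - (ContinuousLinearMap.adjoint A) (A x - etaL),
    ⟨hx, fun k => xs (φk k),
      fun k => vs (φk k) - (ContinuousLinearMap.adjoint A) (A (xs (φk k)) - η (φk k)),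
      fun k => reg_step A C D (hη (φk k)) (hvs (φk k)),
      hxs.comp hmono.tendsto_atTop,
      (hwlim.comp hmono.tendsto_atTop).sub h3⟩, by abel⟩
end

section
/- Suppose C^∞ ∩ A⁻¹(D^∞) = {0} and that F is a KL function. Let 0 < L_min ≤ L_max < ∞ and c > 0, let x⁰ ∈ C, and let {x^t} ⊆ C be a sequence such that for every t ≥ 0 there exist η^t ∈ Proj_D(Ax^t) and L̄_t ∈ [L_min, L_max] with x^{t+1} ∈ Proj_C(x^t − Aᵀ(Ax^t − η^t)/L̄_t) and d(Ax^{t+1}, D)² ≤ d(Ax^t, D)² − c‖x^{t+1} − x^t‖² (the iterates of SpFeas_DC_ls with M = 0). Then {x^t} is bounded. Moreover, if x* is an accumulation point of {x^t} such that the function y ↦ ½ d(y, D)² is continuously differentiable on a neighborhood of Ax* with locally Lipschitz gradient there, then the whole sequence {x^t} converges. -/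
/-
Boundedness: by the horizon-cone condition the sets `{x ∈ C | d(Ax, D) ≤ r}` are bounded (an
unbounded sequence in one of them, normalized, has a limit point `z ≠ 0` with `z ∈ C^∞` and
`Az ∈ D^∞`), and `d(Ax^t, D)` is nonincreasing.

Convergence: near `Ax*` the gradient of `½ d(·, D)²` at `Ax^t` is `Ax^t - η^t`, so the projection
step exhibits a regular subgradient of `F` at `x^{t+1}` of norm `O(‖x^{t+1} - x^t‖)`. With the
sufficient decrease this is the Attouch–Bolte–Svaiter setting: writing `r_t = F(x^t) - F(x*)`,
the KL inequality at `x*` and the concavity of `ψ` give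
`‖x^{t+2} - x^{t+1}‖ ≤ ½ ‖x^{t+1} - x^t‖ + K (ψ(r_{t+1}) - ψ(r_{t+2}))` while the iterates stay
near `x*`. Summing, iterates that start close enough to `x*` never leave and have finite length.
-/

open Filter Topology Metric
open scoped RealInnerProductSpace

open scoped NNReal

lemma ConcaveOn.mul_sub_le_sub_of_hasDerivAt {ψ : ℝ → ℝ} {S : Set ℝ} {r₁ r₂ ψ'₁ : ℝ}
    (hψ : ConcaveOn ℝ S ψ) (hr₁ : r₁ ∈ S) (hr₂ : r₂ ∈ S) (hr : r₂ ≤ r₁)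
    (hd : HasDerivAt ψ ψ'₁ r₁) : ψ'₁ * (r₁ - r₂) ≤ ψ r₁ - ψ r₂ := by
  rcases hr.lt_or_eq with hlt | rfl
  · have := hψ.le_slope_of_hasDerivAt hr₂ hr₁ hlt hd
    rwa [slope_def_field, le_div_iff₀ (sub_pos.mpr hlt)] at this
  · simp

lemma le_half_add_of_concave {ψ : ℝ → ℝ} {s a b r₁ r₂ δ₀ δ₁ ψ'₁ : ℝ}
    (hψ : ConcaveOn ℝ (Set.Ico 0 s) ψ) (hr₁ : r₁ ∈ Set.Ico 0 s) (hr₂ : 0 ≤ r₂)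
    (ha : 0 < a) (hb : 0 ≤ b) (hδ₀ : 0 ≤ δ₀) (hδ₁ : 0 ≤ δ₁)
    (hdec : r₂ + a * δ₁ ^ 2 ≤ r₁)
    (hKL : 0 < r₁ → HasDerivAt ψ ψ'₁ r₁ ∧ 1 ≤ ψ'₁ * (b * δ₀)) :
    δ₁ ≤ δ₀ / 2 + b / (2 * a) * (ψ r₁ - ψ r₂) := by
  have hgap : 0 ≤ r₁ - r₂ := by nlinarith
  rcases hr₁.1.lt_or_eq with hpos | hzero
  · obtain ⟨hd, h1⟩ := hKL hpos
    have htan := hψ.mul_sub_le_sub_of_hasDerivAt hr₁ ⟨hr₂, by linarith [hr₁.2]⟩ (by linarith) hd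
    set k := b / (2 * a) * (ψ r₁ - ψ r₂)
    have hk : 2 * a * k = b * (ψ r₁ - ψ r₂) := by simp only [k]; field_simp
    have hsq : a * δ₁ ^ 2 ≤ a * (2 * k * δ₀) :=
      calc a * δ₁ ^ 2 ≤ (r₁ - r₂) * (ψ'₁ * (b * δ₀)) := by nlinarith
        _ = ψ'₁ * (r₁ - r₂) * (b * δ₀) := by ring
        _ ≤ (ψ r₁ - ψ r₂) * (b * δ₀) := by gcongr
        _ = a * (2 * k * δ₀) := by linear_combination δ₀ * hk.symm
    have hψ'₁ : 0 ≤ ψ'₁ := by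
      by_contra! h
      nlinarith [mul_nonneg hb hδ₀]
    have hk0 : 0 ≤ k := mul_nonneg (by positivity) ((mul_nonneg hψ'₁ hgap).trans htan)
    -- AM-GM: `2 k δ₀ ≤ (δ₀ / 2 + k)²`
    have hsq' : δ₁ ^ 2 ≤ (δ₀ / 2 + k) ^ 2 := by
      nlinarith [le_of_mul_le_mul_left hsq ha, sq_nonneg (δ₀ / 2 - k)]
    exact (pow_le_pow_iff_left₀ hδ₁ (by positivity) two_ne_zero).mp hsq'
  · subst hzero
    have hr₂0 : r₂ = 0 := by nlinarith
    have hδ₁0 : δ₁ = 0 := by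
      by_contra! h
      nlinarith [mul_pos (mul_pos ha (lt_of_le_of_ne hδ₁ h.symm)) (lt_of_le_of_ne hδ₁ h.symm)]
    subst hr₂0 hδ₁0
    simp only [sub_self, mul_zero, add_zero]
    positivity

lemma sum_range_add_le_of_le_half_add {d p : ℕ → ℝ} {K : ℝ} {N : ℕ}
    (h : ∀ t < N, d (t + 1) ≤ d t / 2 + K * (p (t + 1) - p (t + 2))) :
    ∑ t ∈ Finset.range N, d (t + 1) + d N ≤ d 0 + 2 * K * (p 1 - p (N + 1)) := by
  induction N with
  | zero => simp
  | succ N ih =>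
    rw [Finset.sum_range_succ]
    linarith [ih fun t ht => h t (by omega), h N (by omega)]

lemma cauchySeq_of_dist_succ_le_half_add {E : Type*} [PseudoMetricSpace E] {x : ℕ → E} {z : E}
    {ρ K : ℝ} {p : ℕ → ℝ} (hp : ∀ t, 0 ≤ p t) (hK : 0 ≤ K)
    (hstep : ∀ t, x t ∈ ball z ρ → x (t + 1) ∈ ball z ρ →
      dist (x (t + 1)) (x (t + 2)) ≤ dist (x t) (x (t + 1)) / 2 + K * (p (t + 1) - p (t + 2)))
    (hstart : dist (x 0) z + 2 * dist (x 0) (x 1) + 2 * K * p 1 < ρ) :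
    CauchySeq x := by
  set d : ℕ → ℝ := fun t => dist (x t) (x (t + 1))
  have hsum : ∀ N, (∀ t < N, x t ∈ ball z ρ ∧ x (t + 1) ∈ ball z ρ) →
      ∑ t ∈ Finset.range N, d (t + 1) ≤ d 0 + 2 * K * p 1 := fun N hN => by
    have := sum_range_add_le_of_le_half_add (d := d) fun t ht => hstep t (hN t ht).1 (hN t ht).2
    nlinarith [dist_nonneg (x := x N) (y := x (N + 1)), mul_nonneg hK (hp (N + 1))]
  have hball : ∀ N, ∀ t ≤ N, x t ∈ ball z ρ := by
    intro N
    induction N with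
    | zero =>
      intro t ht
      obtain rfl : t = 0 := by omega
      rw [mem_ball]
      nlinarith [dist_nonneg (x := x 0) (y := x 1), mul_nonneg hK (hp 1)]
    | succ N ih =>
      intro t ht
      rcases Nat.lt_or_ge t (N + 1) with ht' | ht'
      · exact ih t (by omega)
      obtain rfl : t = N + 1 := by omega
      have hS := hsum N fun t ht => ⟨ih t ht.le, ih (t + 1) ht⟩
      have hpath := dist_le_range_sum_dist x (N + 1)
      rw [Finset.sum_range_succ'] at hpath
      rw [mem_ball]
      linarith [dist_triangle_left (x (N + 1)) z (x 0)]
  have hsummable : Summable d :=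
    (summable_nat_add_iff 1).mp <| summable_of_sum_range_le (fun _ => dist_nonneg) fun N =>
      hsum N fun t ht => ⟨hball N t ht.le, hball N (t + 1) ht⟩
  exact cauchySeq_of_summable_dist hsummable

lemma tendsto_dist_succ_of_add_sq_le {E : Type*} [PseudoMetricSpace E] {f : E → ℝ}
    {x : ℕ → E} {a l : ℝ} (ha : 0 < a)
    (hdec : ∀ t, f (x (t + 1)) + a * dist (x t) (x (t + 1)) ^ 2 ≤ f (x t))
    (hf : Tendsto (fun t => f (x t)) atTop (𝓝 l)) :
    Tendsto (fun t => dist (x t) (x (t + 1))) atTop (𝓝 0) := by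
  have hsq : Tendsto (fun t => dist (x t) (x (t + 1)) ^ 2) atTop (𝓝 0) := by
    refine squeeze_zero (fun _ => sq_nonneg _) (fun t => ?_)
      (by simpa using ((hf.sub (hf.comp (tendsto_add_atTop_nat 1))).div_const a))
    rw [le_div_iff₀ ha]
    linarith [hdec t]
  simpa using hsq.sqrt

/-- The abstract convergence theorem of Attouch, Bolte and Svaiter, with the relative error
bound folded into the Kurdyka–Łojasiewicz inequality along the sequence. -/
theorem tendsto_of_kurdykaLojasiewicz {E : Type*} [MetricSpace E] [CompleteSpace E]
    {f : E → ℝ} {x : ℕ → E} {z : E} {a b s ρ : ℝ} {ψ ψ' : ℝ → ℝ}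
    (ha : 0 < a) (hb : 0 ≤ b) (hs : 0 < s) (hρ : 0 < ρ)
    (hdec : ∀ t, f (x (t + 1)) + a * dist (x t) (x (t + 1)) ^ 2 ≤ f (x t))
    (hfz : Tendsto (fun t => f (x t)) atTop (𝓝 (f z))) (hz : MapClusterPt z atTop x)
    (hψ0 : ψ 0 = 0) (hψc : ContinuousWithinAt ψ (Set.Ico 0 s) 0)
    (hψ : ConcaveOn ℝ (Set.Ico 0 s) ψ) (hψnn : ∀ r ∈ Set.Ico 0 s, 0 ≤ ψ r)
    (hψd : ∀ r ∈ Set.Ioo 0 s, HasDerivAt ψ (ψ' r) r)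
    (hKL : ∀ t, x t ∈ ball z ρ → x (t + 1) ∈ ball z ρ → f z < f (x (t + 1)) →
      f (x (t + 1)) < f z + s → 1 ≤ ψ' (f (x (t + 1)) - f z) * (b * dist (x t) (x (t + 1)))) :
    Tendsto x atTop (𝓝 z) := by
  set r : ℕ → ℝ := fun t => f (x t) - f z
  have hanti : Antitone r := antitone_nat_of_succ_le fun t => by
    nlinarith [hdec t, mul_nonneg ha.le (sq_nonneg (dist (x t) (x (t + 1))))]
  have hr : Tendsto r atTop (𝓝 0) := by simpa using hfz.sub_const (f z)
  have hr0 : ∀ t, 0 ≤ r t := hanti.le_of_tendsto hr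
  have hrs : ∀ᶠ t in atTop, r t ∈ Set.Ico 0 s :=
    (hr.eventually_lt_const hs).mono fun t ht => ⟨hr0 t, ht⟩
  have hψr : Tendsto (fun t => ψ (r t)) atTop (𝓝 0) :=
    hψ0 ▸ hψc.tendsto.comp (tendsto_nhdsWithin_iff.mpr ⟨hr, hrs⟩)
  have hd := tendsto_dist_succ_of_add_sq_le ha hdec hfz
  set K := b / (2 * a)
  obtain ⟨t₀, hzt₀, hdt₀, hψt₀, hrt₀⟩ : ∃ t₀, dist (x t₀) z < ρ / 3 ∧
      2 * dist (x t₀) (x (t₀ + 1)) < ρ / 3 ∧ 2 * K * ψ (r (t₀ + 1)) < ρ / 3 ∧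
      r t₀ ∈ Set.Ico 0 s := by
    have h3 : (0 : ℝ) < ρ / 3 := by positivity
    exact ((mapClusterPt_iff_frequently.mp hz _ (ball_mem_nhds z h3)).and_eventually
      (((hd.const_mul 2).eventually_lt_const (by simpa using h3)).and
      ((((hψr.comp (tendsto_add_atTop_nat 1)).const_mul (2 * K)).eventually_lt_const
        (by simpa using h3)).and hrs))).exists
  have hrt : ∀ k, r (t₀ + k) < s := fun k => (hanti (by omega)).trans_lt hrt₀.2
  have hcauchy : CauchySeq fun k => x (t₀ + k) := by
    refine cauchySeq_of_dist_succ_le_half_add (z := z) (ρ := ρ) (K := K)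
      (p := fun k => ψ (r (t₀ + k))) (fun k => hψnn _ ⟨hr0 _, hrt k⟩) (by positivity)
      (fun k hk hk1 => ?_) (by simp only [add_zero]; linarith)
    refine le_half_add_of_concave (ψ'₁ := ψ' (r (t₀ + k + 1))) hψ ⟨hr0 _, hrt (k + 1)⟩ (hr0 _)
      ha hb dist_nonneg dist_nonneg (by linear_combination hdec (t₀ + k + 1)) fun hpos => ?_
    have hr₁ : r (t₀ + k + 1) ∈ Set.Ioo 0 s := ⟨hpos, hrt (k + 1)⟩
    exact ⟨hψd _ hr₁, hKL (t₀ + k) hk hk1 (by linarith [hr₁.1]) (by linarith [hr₁.2])⟩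
  exact le_nhds_of_cauchy_adhp
    ((cauchySeq_shift t₀).mp (by simpa only [add_comm] using hcauchy)) hz

lemma isBounded_setOf_infDist_le {E F : Type*} [NormedAddCommGroup E] [NormedSpace ℝ E]
    [ProperSpace E] [NormedAddCommGroup F] [NormedSpace ℝ F] (A : E →L[ℝ] F) {C : Set E}
    {D : Set F} (hD : D.Nonempty) (hhor : ∀ z, z ∈ horizonCone C → A z ∈ horizonCone D → z = 0)
    (r : ℝ) : Bornology.IsBounded {x | x ∈ C ∧ infDist (A x) D ≤ r} := by
  by_contra hunb
  obtain ⟨u, hu, hnu⟩ : ∃ u : ℕ → E, (∀ k, u k ∈ C ∧ infDist (A (u k)) D ≤ r) ∧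
      ∀ k : ℕ, (k : ℝ) < ‖u k‖ := by
    simp only [isBounded_iff_forall_norm_le, not_exists, not_forall, not_le] at hunb
    choose u hu hnu using fun k : ℕ => hunb (k : ℝ)
    exact ⟨u, hu, hnu⟩
  have hupos : ∀ k, 0 < ‖u k‖ := fun k => (Nat.cast_nonneg k).trans_lt (hnu k)
  obtain ⟨η, hηD, hη⟩ : ∃ η : ℕ → F, (∀ k, η k ∈ D) ∧ ∀ k, dist (A (u k)) (η k) < r + 1 := by
    choose η hηD hη using fun k =>
      (infDist_lt_iff hD).mp ((hu k).2.trans_lt (lt_add_one r))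
    exact ⟨η, hηD, hη⟩
  set β : ℕ → ℝ := fun k => ‖u k‖⁻¹
  have hβpos : ∀ k, 0 < β k := fun k => inv_pos.mpr (hupos k)
  have hβ : Tendsto β atTop (𝓝 0) :=
    (tendsto_atTop_mono (fun k => (hnu k).le) tendsto_natCast_atTop_atTop).inv_tendsto_atTop
  obtain ⟨z, hz, σ, hσ, hlim⟩ := (isCompact_sphere (0 : E) 1).tendsto_subseq
    (x := fun k => β k • u k) fun k => by
      simp [β, norm_smul, (hupos k).ne']
  have hβσ := hβ.comp hσ.tendsto_atTop
  have hzC : z ∈ horizonCone C :=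
    ⟨u ∘ σ, β ∘ σ, fun k => (hu _).1, fun k => hβpos _, hβσ, hlim⟩
  have hAzD : A z ∈ horizonCone D := by
    refine ⟨η ∘ σ, β ∘ σ, fun k => hηD _, fun k => hβpos _, hβσ, ?_⟩
    have hgap : Tendsto (fun k => β (σ k) • (η (σ k) - A (u (σ k)))) atTop (𝓝 0) := by
      refine squeeze_zero_norm (fun k => ?_) (by simpa using hβσ.mul_const (r + 1))
      rw [norm_smul, Real.norm_eq_abs, abs_of_pos (hβpos _), ← dist_eq_norm']
      exact mul_le_mul_of_nonneg_left (hη _).le (hβpos _).le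
    simpa [smul_sub] using ((A.continuous.tendsto z).comp hlim).add hgap
  simp [hhor z hzC hAzD] at hz

section Hilbert

variable {E F : Type*} [NormedAddCommGroup E] [InnerProductSpace ℝ E]
  [NormedAddCommGroup F] [InnerProductSpace ℝ F]

lemma HasGradientAt.comp_continuousLinearMap [CompleteSpace E] [CompleteSpace F] {f : F → ℝ}
    {v : F} {x : E} (A : E →L[ℝ] F) (hf : HasGradientAt f v (A x)) :
    HasGradientAt (fun x => f (A x)) (ContinuousLinearMap.adjoint A v) x := by
  rw [hasGradientAt_iff_hasFDerivAt] at hf ⊢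
  refine (hf.comp x A.hasFDerivAt).congr_fderiv ?_
  ext w
  simp [ContinuousLinearMap.adjoint_inner_left]

lemma HasGradientAt.eq_of_le_of_eq [CompleteSpace E] {f g : E → ℝ} {v w y : E}
    (hf : HasGradientAt f v y) (hg : HasGradientAt g w y) (hle : ∀ z, f z ≤ g z)
    (heq : f y = g y) : v = w := by
  have hmin : IsLocalMin (g - f) y :=
    Eventually.of_forall fun z => by simp only [Pi.sub_apply, heq, sub_self]; linarith [hle z]
  have := hmin.hasFDerivAt_eq_zero
    ((hasGradientAt_iff_hasFDerivAt.mp hg).sub (hasGradientAt_iff_hasFDerivAt.mp hf))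
  exact ((InnerProductSpace.toDual ℝ E).injective (sub_eq_zero.mp this)).symm

lemma hasGradientAt_half_norm_sub_sq [CompleteSpace E] (η y : E) :
    HasGradientAt (fun z => ‖z - η‖ ^ 2 / 2) (y - η) y := by
  rw [hasGradientAt_iff_hasFDerivAt]
  refine ((((hasFDerivAt_id y).sub_const η).norm_sq.mul_const (1 / 2 : ℝ)).congr_fderiv ?_)
    |>.congr_of_eventuallyEq (Eventually.of_forall fun z => by simp only [id]; ring)
  ext w
  simp

lemma HasGradientAt.eq_sub_of_mem_projSet [CompleteSpace E] {D : Set E} {y v η : E}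
    (hg : HasGradientAt (fun z => infDist z D ^ 2 / 2) v y) (hη : η ∈ projSet D y) :
    v = y - η := by
  refine hg.eq_of_le_of_eq (hasGradientAt_half_norm_sub_sq η y) (fun z => ?_) ?_
  · have := infDist_le_dist_of_mem hη.1 (x := z)
    rw [dist_eq_norm] at this
    gcongr
    exact infDist_nonneg
  · rw [← dist_eq_norm, hη.2]

lemma inner_sub_le_of_mem_projSet {C : Set E} {y z u : E} (hz : z ∈ projSet C y) (hu : u ∈ C) :
    ⟪y - z, u - z⟫ ≤ ‖u - z‖ ^ 2 / 2 := by
  have hle : ‖y - z‖ ≤ ‖y - u‖ := by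
    rw [← dist_eq_norm, ← dist_eq_norm, hz.2]
    exact infDist_le_dist_of_mem hu
  have hexp : ‖y - u‖ ^ 2 = ‖y - z‖ ^ 2 - 2 * ⟪y - z, u - z⟫ + ‖u - z‖ ^ 2 := by
    rw [show y - u = (y - z) - (u - z) by abel, norm_sub_sq_real]
  nlinarith [pow_le_pow_left₀ (norm_nonneg _) hle 2]

lemma add_smul_sub_mem_regSubdiff [CompleteSpace E] {C : Set E} {φ : E → ℝ} {y z v : E} {L : ℝ}
    (hL : 0 < L) (hz : z ∈ projSet C y) (hφ : HasGradientAt φ v z) :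
    v + L • (y - z) ∈ regSubdiff φ C z := by
  refine ⟨hz.1, fun ε hε => ?_⟩
  obtain ⟨δ, hδ, hball⟩ := Metric.eventually_nhds_iff.mp
    ((hasGradientAt_iff_isLittleO.mp hφ).def (half_pos hε))
  refine ⟨min δ (ε / L), lt_min hδ (by positivity), fun u hu hun => ?_⟩
  have hsmall : L * ‖u - z‖ ≤ ε := by
    have := hun.trans_le (min_le_right _ _)
    rw [lt_div_iff₀ hL] at this
    linarith
  have hnormal : ⟪L • (y - z), u - z⟫ ≤ ε / 2 * ‖u - z‖ := by
    rw [real_inner_smul_left]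
    calc L * ⟪y - z, u - z⟫ ≤ L * (‖u - z‖ ^ 2 / 2) :=
          mul_le_mul_of_nonneg_left (inner_sub_le_of_mem_projSet hz hu) hL.le
      _ ≤ ε / 2 * ‖u - z‖ := by nlinarith [norm_nonneg (u - z)]
  have hlin : ‖φ u - φ z - ⟪v, u - z⟫‖ ≤ ε / 2 * ‖u - z‖ :=
    hball (by rw [dist_eq_norm]; exact hun.trans_le (min_le_left _ _))
  rw [Real.norm_eq_abs, abs_le] at hlin
  rw [inner_add_left]
  linarith [hlin.1]

lemma mem_limSubdiff_of_mem_regSubdiff {φ : E → ℝ} {C : Set E} {z v : E}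
    (h : v ∈ regSubdiff φ C z) : v ∈ limSubdiff φ C z :=
  ⟨h.1, fun _ => z, fun _ => v, fun _ => h, tendsto_const_nhds, tendsto_const_nhds,
    tendsto_const_nhds⟩


lemma zero_mem_limSubdiff_of_tendsto {φ : E → ℝ} {C : Set E} {z : E} {y : ℕ → E}
    {β : ℕ → ℝ} (hφ : ContinuousAt φ z) (hz : z ∈ C) (hy : Tendsto y atTop (𝓝 z))
    (hβ : Tendsto β atTop (𝓝 0)) (hw : ∀ᶠ k in atTop, ∃ w ∈ regSubdiff φ C (y k), ‖w‖ ≤ β k) :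
    0 ∈ limSubdiff φ C z := by
  obtain ⟨N, hN⟩ := eventually_atTop.mp hw
  choose w hw hwβ using fun k => hN (k + N) (Nat.le_add_left N k)
  have hyN := hy.comp (tendsto_add_atTop_nat N)
  exact ⟨hz, fun k => y (k + N), w, hw, hyN, hφ.tendsto.comp hyN,
    squeeze_zero_norm hwβ (hβ.comp (tendsto_add_atTop_nat N))⟩

lemma continuous_half_infDist_sq (A : E →L[ℝ] F) (D : Set F) :
    Continuous fun x => infDist (A x) D ^ 2 / 2 :=
  (((continuous_infDist_pt D).comp A.continuous).pow 2).div_const 2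

/-- The iterates of `SpFeas_DC_ls` with `M = 0`. -/
def IsSpFeasSequence [CompleteSpace E] [CompleteSpace F] (A : E →L[ℝ] F) (C : Set E)
    (D : Set F) (Lmin Lmax c : ℝ) (x : ℕ → E) : Prop :=
  ∀ t : ℕ, ∃ η ∈ projSet D (A (x t)), ∃ Lb : ℝ, Lmin ≤ Lb ∧ Lb ≤ Lmax ∧
    x (t + 1) ∈ projSet C (x t - Lb⁻¹ • ((ContinuousLinearMap.adjoint A) (A (x t) - η))) ∧
    infDist (A (x (t + 1))) D ^ 2 ≤
      infDist (A (x t)) D ^ 2 - c * ‖x (t + 1) - x t‖ ^ 2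

namespace IsSpFeasSequence

variable [CompleteSpace E] [CompleteSpace F] {A : E →L[ℝ] F} {C : Set E} {D : Set F}
  {Lmin Lmax c : ℝ} {x : ℕ → E}

lemma half_infDist_sq_add_le (hx : IsSpFeasSequence A C D Lmin Lmax c x) (t : ℕ) :
    infDist (A (x (t + 1))) D ^ 2 / 2 + c / 2 * dist (x t) (x (t + 1)) ^ 2 ≤
      infDist (A (x t)) D ^ 2 / 2 := by
  obtain ⟨-, -, -, -, -, -, h⟩ := hx t
  rw [dist_comm, dist_eq_norm]
  linarith

lemma exists_mem_regSubdiff_norm_le (hx : IsSpFeasSequence A C D Lmin Lmax c x)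
    (hLmin : 0 < Lmin) {V : Set F} {g : F → F} {K : ℝ≥0}
    (hg : ∀ y ∈ V, HasGradientAt (fun z => infDist z D ^ 2 / 2) (g y) y)
    (hgK : LipschitzOnWith K g V) {t : ℕ} (h₀ : A (x t) ∈ V) (h₁ : A (x (t + 1)) ∈ V) :
    ∃ w ∈ regSubdiff (fun x => infDist (A x) D ^ 2 / 2) C (x (t + 1)),
      ‖w‖ ≤ (K * ‖A‖ ^ 2 + Lmax) * dist (x t) (x (t + 1)) := by
  obtain ⟨η, hη, L, hLmin', hLmax, hproj, -⟩ := hx t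
  have hL : 0 < L := hLmin.trans_le hLmin'
  set A' := ContinuousLinearMap.adjoint A
  refine ⟨_, add_smul_sub_mem_regSubdiff hL hproj ((hg _ h₁).comp_continuousLinearMap A), ?_⟩
  have hgx : g (A (x t)) = A (x t) - η := (hg _ h₀).eq_sub_of_mem_projSet hη
  -- the gradient at the old point cancels against the gradient step
  have hw : A' (g (A (x (t + 1)))) + L • (x t - L⁻¹ • A' (A (x t) - η) - x (t + 1)) =
      A' (g (A (x (t + 1))) - g (A (x t))) + L • (x t - x (t + 1)) := by
    simp only [hgx, map_sub, smul_sub, smul_inv_smul₀ hL.ne']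
    abel
  have hlip : ‖g (A (x (t + 1))) - g (A (x t))‖ ≤ K * (‖A‖ * dist (x t) (x (t + 1))) :=
    calc ‖g (A (x (t + 1))) - g (A (x t))‖ ≤ K * dist (A (x (t + 1))) (A (x t)) := by
          simpa [dist_eq_norm] using hgK.dist_le_mul _ h₁ _ h₀
      _ ≤ K * (‖A‖ * dist (x t) (x (t + 1))) := by
          rw [dist_comm, dist_eq_norm, dist_eq_norm, ← map_sub]
          gcongr
          exact A.le_opNorm _
  rw [hw]
  calc ‖A' (g (A (x (t + 1))) - g (A (x t))) + L • (x t - x (t + 1))‖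
      ≤ ‖A'‖ * ‖g (A (x (t + 1))) - g (A (x t))‖ + L * dist (x t) (x (t + 1)) :=
        norm_add_le_of_le (A'.le_opNorm _)
          (by rw [norm_smul, Real.norm_eq_abs, abs_of_pos hL, dist_eq_norm])
    _ ≤ ‖A‖ * (K * (‖A‖ * dist (x t) (x (t + 1)))) + Lmax * dist (x t) (x (t + 1)) := by
        rw [LinearIsometryEquiv.norm_map]
        gcongr
    _ = (K * ‖A‖ ^ 2 + Lmax) * dist (x t) (x (t + 1)) := by ring

lemma antitone_half_infDist_sq (hx : IsSpFeasSequence A C D Lmin Lmax c x) (hc : 0 ≤ c) :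
    Antitone fun t => infDist (A (x t)) D ^ 2 / 2 :=
  antitone_nat_of_succ_le fun t => by
    nlinarith [hx.half_infDist_sq_add_le t, mul_nonneg hc (sq_nonneg (dist (x t) (x (t + 1))))]

lemma isBounded_range [ProperSpace E] (hx : IsSpFeasSequence A C D Lmin Lmax c x) (hc : 0 ≤ c)
    (hxC : ∀ t, x t ∈ C) (hD : D.Nonempty)
    (hhor : ∀ z, z ∈ horizonCone C → A z ∈ horizonCone D → z = 0) :
    Bornology.IsBounded (Set.range x) := by
  refine (isBounded_setOf_infDist_le A hD hhor (infDist (A (x 0)) D)).subset ?_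
  rintro _ ⟨t, rfl⟩
  have h := hx.antitone_half_infDist_sq hc (Nat.zero_le t)
  refine ⟨hxC t, ?_⟩
  nlinarith [infDist_nonneg (x := A (x t)) (s := D), infDist_nonneg (x := A (x 0)) (s := D)]

lemma tendsto_half_infDist_sq (hx : IsSpFeasSequence A C D Lmin Lmax c x) (hc : 0 ≤ c)
    {σ : ℕ → ℕ} (hσ : StrictMono σ) {z : E} (hz : Tendsto (fun t => x (σ t)) atTop (𝓝 z)) :
    Tendsto (fun t => infDist (A (x t)) D ^ 2 / 2) atTop (𝓝 (infDist (A z) D ^ 2 / 2)) :=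
  (tendsto_iff_tendsto_subseq_of_antitone (hx.antitone_half_infDist_sq hc)
    hσ.tendsto_atTop).mpr (((continuous_half_infDist_sq A D).tendsto z).comp hz)

lemma zero_mem_limSubdiff (hx : IsSpFeasSequence A C D Lmin Lmax c x) (hc : 0 < c)
    (hLmin : 0 < Lmin) (hC : IsClosed C) (hxC : ∀ t, x t ∈ C) {σ : ℕ → ℕ} (hσ : StrictMono σ)
    {z : E} (hz : Tendsto (fun t => x (σ t)) atTop (𝓝 z)) {ε : ℝ} (hε : 0 < ε) {g : F → F}
    {K : ℝ≥0} (hg : ∀ y ∈ ball (A z) ε, HasGradientAt (fun z => infDist z D ^ 2 / 2) (g y) y)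
    (hgK : LipschitzOnWith K g (ball (A z) ε)) :
    0 ∈ limSubdiff (fun x => infDist (A x) D ^ 2 / 2) C z := by
  have hd := (tendsto_dist_succ_of_add_sq_le (f := fun x => infDist (A x) D ^ 2 / 2)
    (half_pos hc) hx.half_infDist_sq_add_le
    (hx.tendsto_half_infDist_sq hc.le hσ hz)).comp hσ.tendsto_atTop
  have hz₁ : Tendsto (fun t => x (σ t + 1)) atTop (𝓝 z) := hz.congr_dist hd
  have hball := fun {y : ℕ → E} (hy : Tendsto y atTop (𝓝 z)) =>
    ((A.continuous.tendsto z).comp hy).eventually (ball_mem_nhds _ hε)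
  exact zero_mem_limSubdiff_of_tendsto (continuous_half_infDist_sq A D).continuousAt
    (hC.mem_of_tendsto hz (.of_forall fun k => hxC _)) hz₁
    (by simpa using hd.const_mul (K * ‖A‖ ^ 2 + Lmax))
    (((hball hz).and (hball hz₁)).mono fun k hk =>
      hx.exists_mem_regSubdiff_norm_le hLmin hg hgK hk.1 hk.2)

end IsSpFeasSequence

end Hilbert

theorem stmt_10_general (n m : ℕ)
    (A : EuclideanSpace ℝ (Fin n) →L[ℝ] EuclideanSpace ℝ (Fin m))
    (C : Set (EuclideanSpace ℝ (Fin n))) (D : Set (EuclideanSpace ℝ (Fin m)))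
    (hCcl : IsClosed C) (hDne : D.Nonempty)
    (hhor : ∀ z, z ∈ horizonCone C → A z ∈ horizonCone D → z = 0)
    (hKL : ∀ xb : EuclideanSpace ℝ (Fin n), (limSubdiff (phiF A D) C xb).Nonempty →
      ∃ (U : Set (EuclideanSpace ℝ (Fin n))) (s : ℝ) (ψ ψ' : ℝ → ℝ),
        U ∈ 𝓝 xb ∧ 0 < s ∧ ψ 0 = 0 ∧
        ContinuousOn ψ (Set.Ico 0 s) ∧ ConcaveOn ℝ (Set.Ico 0 s) ψ ∧
        (∀ a ∈ Set.Ico (0 : ℝ) s, 0 ≤ ψ a) ∧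
        (∀ a ∈ Set.Ioo (0 : ℝ) s, HasDerivAt ψ (ψ' a) a) ∧
        ContinuousOn ψ' (Set.Ioo 0 s) ∧ (∀ a ∈ Set.Ioo (0 : ℝ) s, 0 < ψ' a) ∧
        (∀ z ∈ U, z ∈ C → phiF A D xb < phiF A D z → phiF A D z < phiF A D xb + s →
          ∀ w ∈ limSubdiff (phiF A D) C z,
            ψ' (phiF A D z - phiF A D xb) * ‖w‖ ≥ 1))
    (Lmin Lmax c : ℝ) (hLmin : 0 < Lmin) (hLmm : Lmin ≤ Lmax) (hc : 0 < c)
    (x : ℕ → EuclideanSpace ℝ (Fin n)) (hxC : ∀ t, x t ∈ C)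
    (hstep : ∀ t : ℕ, ∃ η ∈ projSet D (A (x t)), ∃ Lb : ℝ, Lmin ≤ Lb ∧ Lb ≤ Lmax ∧
      x (t + 1) ∈ projSet C (x t - Lb⁻¹ • ((ContinuousLinearMap.adjoint A) (A (x t) - η))) ∧
      Metric.infDist (A (x (t + 1))) D ^ 2 ≤
        Metric.infDist (A (x t)) D ^ 2 - c * ‖x (t + 1) - x t‖ ^ 2) :
    Bornology.IsBounded (Set.range x) ∧
    ∀ xstar : EuclideanSpace ℝ (Fin n),
      (∃ σ : ℕ → ℕ, StrictMono σ ∧ Tendsto (fun t => x (σ t)) atTop (𝓝 xstar)) →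
      (∃ ε > 0, ∃ g : EuclideanSpace ℝ (Fin m) → EuclideanSpace ℝ (Fin m), ∃ K : NNReal,
        (∀ y ∈ Metric.ball (A xstar) ε,
          HasGradientAt (fun z => Metric.infDist z D ^ 2 / 2) (g y) y) ∧
        ContinuousOn g (Metric.ball (A xstar) ε) ∧
        LipschitzOnWith K g (Metric.ball (A xstar) ε)) →
      ∃ xl, Tendsto x atTop (𝓝 xl) := by
  have hx : IsSpFeasSequence A C D Lmin Lmax c x := hstep
  refine ⟨hx.isBounded_range hc.le hxC hDne hhor, ?_⟩
  rintro xstar ⟨σ, hσ, hxσ⟩ ⟨ε, hε, g, K, hg, -, hgK⟩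
  obtain ⟨U, s, ψ, ψ', hU, hs, hψ0, hψc, hψ, hψnn, hψd, -, hψ'pos, hKLx⟩ :=
    hKL xstar ⟨0, hx.zero_mem_limSubdiff hc hLmin hCcl hxC hσ hxσ hε hg hgK⟩
  obtain ⟨ρ, hρ, hρU⟩ := Metric.mem_nhds_iff.mp
    (inter_mem hU (A.continuous.continuousAt.preimage_mem_nhds (ball_mem_nhds _ hε)))
  refine ⟨xstar, tendsto_of_kurdykaLojasiewicz (f := phiF A D) (b := K * ‖A‖ ^ 2 + Lmax)
    (half_pos hc) (by nlinarith [hLmin.trans_le hLmm, K.coe_nonneg, sq_nonneg ‖A‖]) hs hρ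
    hx.half_infDist_sq_add_le (hx.tendsto_half_infDist_sq hc.le hσ hxσ)
    (hxσ.mapClusterPt.of_comp hσ.tendsto_atTop) hψ0 (hψc 0 ⟨le_rfl, hs⟩) hψ hψnn hψd
    fun t ht ht₁ hlo hhi => ?_⟩
  obtain ⟨w, hw, hwb⟩ := hx.exists_mem_regSubdiff_norm_le hLmin hg hgK (hρU ht).2 (hρU ht₁).2
  calc 1 ≤ ψ' (phiF A D (x (t + 1)) - phiF A D xstar) * ‖w‖ :=
        hKLx _ (hρU ht₁).1 (hxC _) hlo hhi w (mem_limSubdiff_of_mem_regSubdiff hw)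
    _ ≤ _ := by
        gcongr
        exact (hψ'pos _ ⟨sub_pos.mpr hlo, by linarith⟩).le

/-- Global convergence of `SpFeas_DC_ls` with `M = 0`: under the
horizon-cone condition and the KL property of `F = ½ d(A·, D)² + δ_C`, the iterates are
bounded; moreover, if `y ↦ ½ d(y, D)²` is continuously differentiable with locally Lipschitz
gradient around `A x*` for an accumulation point `x*`, the whole sequence converges. -/
theorem stmt_10 (n m : ℕ)
    (A : EuclideanSpace ℝ (Fin n) →L[ℝ] EuclideanSpace ℝ (Fin m))
    (C : Set (EuclideanSpace ℝ (Fin n))) (D : Set (EuclideanSpace ℝ (Fin m)))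
    (hCne : C.Nonempty) (hCcl : IsClosed C) (hDne : D.Nonempty) (hDcl : IsClosed D)
    (hhor : ∀ z, z ∈ horizonCone C → A z ∈ horizonCone D → z = 0)
    (hKL : ∀ xb : EuclideanSpace ℝ (Fin n), (limSubdiff (phiF A D) C xb).Nonempty →
      ∃ (U : Set (EuclideanSpace ℝ (Fin n))) (s : ℝ) (ψ ψ' : ℝ → ℝ),
        U ∈ 𝓝 xb ∧ 0 < s ∧ ψ 0 = 0 ∧
        ContinuousOn ψ (Set.Ico 0 s) ∧ ConcaveOn ℝ (Set.Ico 0 s) ψ ∧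
        (∀ a ∈ Set.Ico (0 : ℝ) s, 0 ≤ ψ a) ∧
        (∀ a ∈ Set.Ioo (0 : ℝ) s, HasDerivAt ψ (ψ' a) a) ∧
        ContinuousOn ψ' (Set.Ioo 0 s) ∧ (∀ a ∈ Set.Ioo (0 : ℝ) s, 0 < ψ' a) ∧
        (∀ z ∈ U, z ∈ C → phiF A D xb < phiF A D z → phiF A D z < phiF A D xb + s →
          ∀ w ∈ limSubdiff (phiF A D) C z,
            ψ' (phiF A D z - phiF A D xb) * ‖w‖ ≥ 1))
    (Lmin Lmax c : ℝ) (hLmin : 0 < Lmin) (hLmm : Lmin ≤ Lmax) (hc : 0 < c)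
    (x : ℕ → EuclideanSpace ℝ (Fin n)) (hxC : ∀ t, x t ∈ C)
    (hstep : ∀ t : ℕ, ∃ η ∈ projSet D (A (x t)), ∃ Lb : ℝ, Lmin ≤ Lb ∧ Lb ≤ Lmax ∧
      x (t + 1) ∈ projSet C (x t - Lb⁻¹ • ((ContinuousLinearMap.adjoint A) (A (x t) - η))) ∧
      Metric.infDist (A (x (t + 1))) D ^ 2 ≤
        Metric.infDist (A (x t)) D ^ 2 - c * ‖x (t + 1) - x t‖ ^ 2) :
    Bornology.IsBounded (Set.range x) ∧
    ∀ xstar : EuclideanSpace ℝ (Fin n),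
      (∃ σ : ℕ → ℕ, StrictMono σ ∧ Tendsto (fun t => x (σ t)) atTop (𝓝 xstar)) →
      (∃ ε > 0, ∃ g : EuclideanSpace ℝ (Fin m) → EuclideanSpace ℝ (Fin m), ∃ K : NNReal,
        (∀ y ∈ Metric.ball (A xstar) ε,
          HasGradientAt (fun z => Metric.infDist z D ^ 2 / 2) (g y) y) ∧
        ContinuousOn g (Metric.ball (A xstar) ε) ∧
        LipschitzOnWith K g (Metric.ball (A xstar) ε)) →
      ∃ xl, Tendsto x atTop (𝓝 xl) :=
  stmt_10_general n m A C D hCcl hDne hhor hKL Lmin Lmax c hLmin hLmm hc x hxC hstep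
end

section
/- Suppose D = ⋃_{i=1}^k D_i, where each D_i ⊆ ℝᵐ is nonempty, closed and convex. Let y* ∈ ℝᵐ and suppose the active index set I(y*) := {i : d(y*, D) = d(y*, D_i)} is a singleton {i₀}. Then there exists ε > 0 such that d(y, D) = d(y, D_{i₀}) for all y ∈ B(y*, ε); consequently, the function y ↦ ½ d(y, D)² is continuously differentiable on B(y*, ε) with gradient y ↦ y − P_{D_{i₀}}(y), and this gradient is Lipschitz continuous on B(y*, ε). In particular, y ↦ ½ d(y, D)² is continuously differentiable at y* with locally Lipschitz gradient. -/
open Filter Topology Metric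
open scoped RealInnerProductSpace

/-!
Near `y*` every set `Dᵢ` with `i ≠ i₀` is strictly farther away than `D_{i₀}`, and by continuity
of the distance functions this persists on a neighbourhood, so there `d(·, D) = d(·, D_{i₀})`.
The claims about `½ d(·, D)²` are then claims about a single closed convex set `C`: the nearest
point map `P` satisfies the variational inequality `⟪y - P y, z - P y⟫ ≤ 0` on `C`, hence
`id - P` is firmly nonexpansive, which gives both its Lipschitz continuity and the two-sided
bound `|½ d(u, C)² - ½ d(y, C)² - ⟪y - P y, u - y⟫| ≤ ½ ‖u - y‖²`.
-/

open Set

section NearestPoint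

variable {E : Type*} [NormedAddCommGroup E] [InnerProductSpace ℝ E]

theorem exists_nearestPoint_of_convex [CompleteSpace E] {C : Set E} (hne : C.Nonempty)
    (hcl : IsClosed C) (hconv : Convex ℝ C) :
    ∃ P : E → E, (∀ y, P y ∈ C ∧ dist y (P y) = infDist y C) ∧
      ∀ y, ∀ z ∈ C, ⟪y - P y, z - P y⟫ ≤ 0 := by
  choose P hPC hPmin using exists_norm_eq_iInf_of_complete_convex hne hcl.isComplete hconv
  refine ⟨P, fun y => ⟨hPC y, ?_⟩,
    fun y => (norm_eq_iInf_iff_real_inner_le_zero hconv (hPC y)).1 (hPmin y)⟩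
  simp only [infDist_eq_iInf, dist_eq_norm, hPmin y]

variable {C : Set E} {P : E → E}

theorem norm_sub_nearestPoint_sq_le_inner (hPC : ∀ y, P y ∈ C)
    (hvar : ∀ y, ∀ z ∈ C, ⟪y - P y, z - P y⟫ ≤ 0) (y u : E) :
    ‖(y - P y) - (u - P u)‖ ^ 2 ≤ ⟪y - u, (y - P y) - (u - P u)⟫ := by
  have hy := hvar y (P u) (hPC u)
  have hu := hvar u (P y) (hPC y)
  have hgap : ⟪y - u, (y - P y) - (u - P u)⟫ - ‖(y - P y) - (u - P u)‖ ^ 2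
      = -⟪y - P y, P u - P y⟫ - ⟪u - P u, P y - P u⟫ := by
    rw [show y - u = ((y - P y) - (u - P u)) + (P y - P u) by abel, inner_add_left,
      real_inner_self_eq_norm_sq, show P u - P y = -(P y - P u) by abel, inner_neg_right,
      real_inner_comm, inner_sub_left]
    ring
  linarith

theorem lipschitzWith_one_sub_nearestPoint (hPC : ∀ y, P y ∈ C)
    (hvar : ∀ y, ∀ z ∈ C, ⟪y - P y, z - P y⟫ ≤ 0) :
    LipschitzWith 1 (fun y => y - P y) := by
  refine LipschitzWith.of_dist_le_mul fun y u => ?_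
  rw [NNReal.coe_one, one_mul, dist_eq_norm, dist_eq_norm]
  have hfirm := norm_sub_nearestPoint_sq_le_inner hPC hvar y u
  have hcs := real_inner_le_norm (y - u) ((y - P y) - (u - P u))
  nlinarith [norm_nonneg ((y - P y) - (u - P u)), norm_nonneg (y - u)]

theorem hasGradientAt_half_infDist_sq [CompleteSpace E]
    (hP : ∀ y, P y ∈ C ∧ dist y (P y) = infDist y C)
    (hvar : ∀ y, ∀ z ∈ C, ⟪y - P y, z - P y⟫ ≤ 0) (y : E) :
    HasGradientAt (fun z => infDist z C ^ 2 / 2) (y - P y) y := by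
  have hPC u : P u ∈ C := (hP u).1
  have hdist u : infDist u C = ‖u - P u‖ := by rw [← (hP u).2, dist_eq_norm]
  have hmin u {z} (hz : z ∈ C) : ‖u - P u‖ ^ 2 ≤ ‖u - z‖ ^ 2 := by
    gcongr
    rw [← hdist, ← dist_eq_norm]
    exact infDist_le_dist_of_mem hz
  have hbound u : |infDist u C ^ 2 / 2 - infDist y C ^ 2 / 2 - ⟪y - P y, u - y⟫|
      ≤ ‖u - y‖ ^ 2 / 2 := by
    have hup := hmin u (hPC y)
    have hlow := hmin y (hPC u)
    rw [show u - P y = (y - P y) + (u - y) by abel, norm_add_sq_real] at hup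
    rw [show y - P u = (u - P u) - (u - y) by abel, norm_sub_sq_real (u - P u)] at hlow
    have hmono : 0 ≤ ⟪u - y, (u - P u) - (y - P y)⟫ :=
      (sq_nonneg _).trans (norm_sub_nearestPoint_sq_le_inner hPC hvar u y)
    rw [inner_sub_right, real_inner_comm (u - P u), real_inner_comm (y - P y)] at hmono
    rw [hdist, hdist, abs_le]
    constructor <;> linarith
  rw [hasGradientAt_iff_isLittleO]
  refine (Asymptotics.isBigO_of_le' (c := 1 / 2) _ fun u => ?_).trans_isLittleO
    (Asymptotics.isLittleO_pow_sub_sub y one_lt_two)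
  rw [Real.norm_eq_abs, norm_pow, norm_norm]
  linarith [hbound u]

end NearestPoint

section DistanceToUnion

variable {α ι : Type*} [PseudoMetricSpace α] {s : ι → Set α} {i₀ : ι}

theorem infDist_iUnion_eq_of_forall_le {x : α} (hne : (s i₀).Nonempty)
    (h : ∀ i, infDist x (s i₀) ≤ infDist x (s i)) :
    infDist x (⋃ i, s i) = infDist x (s i₀) := by
  refine le_antisymm (infDist_le_infDist_of_subset (subset_iUnion s i₀) hne) ?_
  rw [le_infDist (hne.mono (subset_iUnion s i₀))]
  intro z hz
  obtain ⟨i, hzi⟩ := mem_iUnion.1 hz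
  exact (h i).trans (infDist_le_dist_of_mem hzi)

theorem eventually_infDist_iUnion_eq [Finite ι] {x : α} (hne : (s i₀).Nonempty)
    (hlt : ∀ i ≠ i₀, infDist x (s i₀) < infDist x (s i)) :
    ∀ᶠ y in 𝓝 x, infDist y (⋃ i, s i) = infDist y (s i₀) := by
  have hle : ∀ᶠ y in 𝓝 x, ∀ i, infDist y (s i₀) ≤ infDist y (s i) := by
    refine eventually_all.2 fun i => ?_
    rcases eq_or_ne i i₀ with rfl | hi
    · exact Eventually.of_forall fun _ => le_rfl
    · exact ((continuous_infDist_pt _).continuousAt.eventually_lt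
        (continuous_infDist_pt _).continuousAt (hlt i hi)).mono fun _ => le_of_lt
  exact hle.mono fun _ => infDist_iUnion_eq_of_forall_le hne

end DistanceToUnion

/-- If `D = ⋃ᵢ Dᵢ` with each `Dᵢ` nonempty closed convex, and the active
index set at `y*` is the singleton `{i₀}`, then near `y*` one has `d(·, D) = d(·, D_{i₀})`;
consequently `½ d(·, D)²` is continuously differentiable there with gradient
`y ↦ y − P_{D_{i₀}}(y)`, which is Lipschitz on the ball. -/
theorem stmt_12 (m k : ℕ) (Di : Fin k → Set (EuclideanSpace ℝ (Fin m)))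
    (hne : ∀ i, (Di i).Nonempty) (hcl : ∀ i, IsClosed (Di i)) (hconv : ∀ i, Convex ℝ (Di i))
    (ystar : EuclideanSpace ℝ (Fin m)) (i₀ : Fin k)
    (hact : {i | Metric.infDist ystar (⋃ j, Di j) = Metric.infDist ystar (Di i)} = {i₀}) :
    ∃ ε > (0 : ℝ), ∃ P : EuclideanSpace ℝ (Fin m) → EuclideanSpace ℝ (Fin m),
      (∀ y, P y ∈ Di i₀ ∧ dist y (P y) = Metric.infDist y (Di i₀)) ∧
      (∀ y ∈ Metric.closedBall ystar ε,
        Metric.infDist y (⋃ j, Di j) = Metric.infDist y (Di i₀)) ∧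
      (∀ y ∈ Metric.closedBall ystar ε,
        HasGradientAt (fun z => Metric.infDist z (⋃ j, Di j) ^ 2 / 2) (y - P y) y) ∧
      ContinuousOn (fun y => y - P y) (Metric.closedBall ystar ε) ∧
      ∃ K : NNReal, LipschitzOnWith K (fun y => y - P y) (Metric.closedBall ystar ε) := by
  have hlt : ∀ i ≠ i₀, infDist ystar (Di i₀) < infDist ystar (Di i) := by
    intro i hi
    have hactive : i₀ ∈ {i | infDist ystar (⋃ j, Di j) = infDist ystar (Di i)} := hact ▸ rfl
    have hinactive : i ∉ {i | infDist ystar (⋃ j, Di j) = infDist ystar (Di i)} := hact ▸ hi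
    rw [← hactive]
    exact (infDist_le_infDist_of_subset (subset_iUnion Di i) (hne i)).lt_of_ne hinactive
  obtain ⟨r, hr, hball⟩ := eventually_nhds_iff_ball.1 (eventually_infDist_iUnion_eq (hne i₀) hlt)
  have hsub : closedBall ystar (r / 2) ⊆ ball ystar r := closedBall_subset_ball (half_lt_self hr)
  obtain ⟨P, hP, hvar⟩ := exists_nearestPoint_of_convex (hne i₀) (hcl i₀) (hconv i₀)
  have hlip := lipschitzWith_one_sub_nearestPoint (fun y => (hP y).1) hvar
  refine ⟨r / 2, half_pos hr, P, hP, fun y hy => hball y (hsub hy), fun y hy => ?_,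
    hlip.continuous.continuousOn, 1, hlip.lipschitzOnWith⟩
  refine (hasGradientAt_half_infDist_sq hP hvar y).congr_of_eventuallyEq ?_
  filter_upwards [isOpen_ball.mem_nhds (hsub hy)] with z hz
  rw [hball z hz]
end

section
/- Let x* ∈ C with Ax* ∈ D, and suppose the pair {C, A⁻¹D} has a linearly regular intersection with respect to A at x*. Then there exist γ₁ > 0 and ε₁ > 0 such that ‖Aᵀ(Ax − η)‖ ≥ γ₁·‖Ax − η‖ whenever ‖x − x*‖ ≤ ε₁ and η ∈ Proj_D(Ax). -/
open Filter Topology Metric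
open scoped RealInnerProductSpace

private lemma proj_reg_normal {m : ℕ} {D : Set (EuclideanSpace ℝ (Fin m))}
    {y η : EuclideanSpace ℝ (Fin m)} (hη : η ∈ projSet D y) {c : ℝ} (hc : 0 ≤ c) :
    c • (y - η) ∈ regNormalCone D η := by
  obtain ⟨hηD, hdist⟩ := hη
  refine ⟨hηD, fun ε hε => ⟨2 * ε / (c + 1), by positivity, fun u huD hu => ?_⟩⟩
  have hkey : 2 * ⟪y - η, u - η⟫ ≤ ‖u - η‖ ^ 2 := by
    have h1 : dist y η ≤ dist y u := hdist ▸ Metric.infDist_le_dist_of_mem huD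
    have h2 : ‖(y - η) - (u - η)‖ ^ 2 = ‖y - η‖^2 - 2 * ⟪y - η, u - η⟫ + ‖u - η‖^2 :=
      norm_sub_sq_real _ _
    have h3 : (y - η) - (u - η) = y - u := by abel
    rw [h3] at h2
    have h4 : ‖y - η‖ ≤ ‖y - u‖ := by simpa [dist_eq_norm] using h1
    nlinarith [norm_nonneg (y - η), norm_nonneg (y - u)]
  rw [real_inner_smul_left]
  have hc1 : (0:ℝ) < c + 1 := by positivity
  have hu' : ‖u - η‖ * (c + 1) < 2 * ε := by
    rw [← lt_div_iff₀ hc1]; exact hu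
  nlinarith [norm_nonneg (u - η), mul_le_mul_of_nonneg_left hu'.le (norm_nonneg (u - η)),
    mul_nonneg hc (sq_nonneg ‖u - η‖)]

/-- Under linearly regular intersection of `{C, A⁻¹D}` with respect to `A`
at `x*`, there are `γ₁ > 0` and `ε₁ > 0` with `‖Aᵀ(Ax − η)‖ ≥ γ₁‖Ax − η‖` whenever
`‖x − x*‖ ≤ ε₁` and `η ∈ Proj_D(Ax)`. -/
theorem stmt_13 (n m : ℕ)
    (A : EuclideanSpace ℝ (Fin n) →L[ℝ] EuclideanSpace ℝ (Fin m))
    (C : Set (EuclideanSpace ℝ (Fin n))) (D : Set (EuclideanSpace ℝ (Fin m)))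
    (hCne : C.Nonempty) (hCcl : IsClosed C) (hDne : D.Nonempty) (hDcl : IsClosed D)
    (xstar : EuclideanSpace ℝ (Fin n)) (hxsC : xstar ∈ C) (hxsD : A xstar ∈ D)
    (hreg : ∀ w v, w ∈ normalCone D (A xstar) → v ∈ normalCone C xstar →
      (ContinuousLinearMap.adjoint A) w + v = 0 → w = 0 ∧ v = 0) :
    ∃ γ₁ > (0 : ℝ), ∃ ε₁ > (0 : ℝ),
      ∀ (x : EuclideanSpace ℝ (Fin n)) (η : EuclideanSpace ℝ (Fin m)),
        ‖x - xstar‖ ≤ ε₁ → η ∈ projSet D (A x) →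
        ‖(ContinuousLinearMap.adjoint A) (A x - η)‖ ≥ γ₁ * ‖A x - η‖ := by
  by_contra hcon
  push_neg at hcon
  set B := ContinuousLinearMap.adjoint A with hB
  have hchoice : ∀ t : ℕ, ∃ x η, ‖x - xstar‖ ≤ 1/((t:ℝ)+1) ∧ η ∈ projSet D (A x) ∧
      ‖B (A x - η)‖ < (1/((t:ℝ)+1)) * ‖A x - η‖ := fun t => by
    obtain ⟨x, η, h1, h2, h3⟩ := hcon (1/((t:ℝ)+1)) (by positivity) (1/((t:ℝ)+1)) (by positivity)
    exact ⟨x, η, h1, h2, h3⟩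
  choose x η hx hηp hlt using hchoice
  set w : ℕ → EuclideanSpace ℝ (Fin m) := fun t => A (x t) - η t with hw
  have hwpos : ∀ t, 0 < ‖w t‖ := fun t => by
    by_contra h
    push_neg at h
    have h0 : ‖w t‖ = 0 := le_antisymm h (norm_nonneg _)
    have h4 : ‖B (w t)‖ < 1/((t:ℝ)+1) * ‖w t‖ := hlt t
    rw [h0, mul_zero] at h4
    exact absurd h4 (norm_nonneg _).not_gt
  set u : ℕ → EuclideanSpace ℝ (Fin m) := fun t => ‖w t‖⁻¹ • w t with hu
  have humem : ∀ t, u t ∈ Metric.sphere (0 : EuclideanSpace ℝ (Fin m)) 1 := fun t => by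
    rw [mem_sphere_zero_iff_norm, hu]
    simp [norm_smul, abs_of_nonneg (inv_nonneg.mpr (norm_nonneg (w t))),
      inv_mul_cancel₀ (hwpos t).ne']
  obtain ⟨u₀, hu₀mem, φ, hφmono, hφtend⟩ :=
    (isCompact_sphere (0 : EuclideanSpace ℝ (Fin m)) 1).tendsto_subseq humem
  have hφge : ∀ t, t ≤ φ t := fun t => hφmono.id_le t
  have hone : Tendsto (fun t : ℕ => 1/((t:ℝ)+1)) atTop (𝓝 0) :=
    tendsto_one_div_add_atTop_nhds_zero_nat
  -- x t → xstar
  have hxt : Tendsto x atTop (𝓝 xstar) := by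
    rw [tendsto_iff_norm_sub_tendsto_zero]
    exact squeeze_zero (fun t => norm_nonneg _) hx hone
  -- η t → A xstar
  have hAxt : Tendsto (fun t => A (x t)) atTop (𝓝 (A xstar)) :=
    (A.continuous.tendsto _).comp hxt
  have hηt : Tendsto η atTop (𝓝 (A xstar)) := by
    rw [tendsto_iff_norm_sub_tendsto_zero]
    have hbnd : ∀ t, ‖η t - A xstar‖ ≤ 2 * ‖A (x t) - A xstar‖ := fun t => by
      have h1 : ‖η t - A (x t)‖ ≤ ‖A (x t) - A xstar‖ := by
        have := (hηp t).2
        have h2 : Metric.infDist (A (x t)) D ≤ dist (A (x t)) (A xstar) :=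
          Metric.infDist_le_dist_of_mem hxsD
        rw [← this] at h2
        calc ‖η t - A (x t)‖ = dist (A (x t)) (η t) := by rw [dist_eq_norm, ← neg_sub, norm_neg]
          _ ≤ dist (A (x t)) (A xstar) := h2
          _ = ‖A (x t) - A xstar‖ := dist_eq_norm _ _
      calc ‖η t - A xstar‖ ≤ ‖η t - A (x t)‖ + ‖A (x t) - A xstar‖ := by
            simpa using norm_sub_le_norm_sub_add_norm_sub (η t) (A (x t)) (A xstar)
        _ ≤ 2 * ‖A (x t) - A xstar‖ := by linarith
    have h0 : Tendsto (fun t => 2 * ‖A (x t) - A xstar‖) atTop (𝓝 0) := by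
      have := (tendsto_iff_norm_sub_tendsto_zero.mp hAxt)
      simpa using this.const_mul 2
    exact squeeze_zero (fun t => norm_nonneg _) hbnd h0
  -- u₀ ∈ normalCone D (A xstar)
  have hu₀N : u₀ ∈ normalCone D (A xstar) := by
    refine ⟨hxsD, fun t => η (φ t), fun t => u (φ t), fun t => ?_, ?_, hφtend⟩
    · have := proj_reg_normal (hηp (φ t)) (inv_nonneg.mpr (norm_nonneg (w (φ t))))
      simpa [hu, hw] using this
    · exact hηt.comp hφmono.tendsto_atTop
  -- B u₀ = 0
  have hBu₀ : B u₀ = 0 := by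
    have h1 : Tendsto (fun t => B (u (φ t))) atTop (𝓝 (B u₀)) :=
      (B.continuous.tendsto _).comp hφtend
    have h2 : Tendsto (fun t => B (u (φ t))) atTop (𝓝 0) := by
      rw [tendsto_zero_iff_norm_tendsto_zero]
      have hbnd : ∀ t, ‖B (u (φ t))‖ ≤ 1/((t:ℝ)+1) := fun t => by
        have h3 : ‖B (u (φ t))‖ = ‖w (φ t)‖⁻¹ * ‖B (w (φ t))‖ := by
          rw [hu]
          simp [map_smul, norm_smul, abs_of_nonneg (inv_nonneg.mpr (norm_nonneg _))]
        have h4 : ‖B (w (φ t))‖ < 1/((φ t:ℝ)+1) * ‖w (φ t)‖ := hlt (φ t)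
        have h5 : ‖w (φ t)‖⁻¹ * ‖B (w (φ t))‖ ≤
            ‖w (φ t)‖⁻¹ * ((1/((φ t : ℝ)+1)) * ‖w (φ t)‖) :=
          mul_le_mul_of_nonneg_left h4.le (inv_nonneg.mpr (norm_nonneg _))
        have h6 : ‖w (φ t)‖⁻¹ * ((1/((φ t : ℝ)+1)) * ‖w (φ t)‖) = 1/((φ t : ℝ)+1) := by
          rw [mul_comm (1/((φ t : ℝ)+1)) (‖w (φ t)‖), ← mul_assoc,
            inv_mul_cancel₀ (hwpos (φ t)).ne', one_mul]
        have h7 : (1:ℝ)/((φ t : ℝ)+1) ≤ 1/((t:ℝ)+1) := by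
          apply one_div_le_one_div_of_le (by positivity)
          have h8 : (t:ℝ) ≤ (φ t : ℝ) := Nat.cast_le.mpr (hφge t)
          linarith
        rw [h3]
        linarith
      exact squeeze_zero (fun t => norm_nonneg _) hbnd hone
    exact tendsto_nhds_unique h1 h2
  -- 0 ∈ normalCone C xstar
  have h0N : (0 : EuclideanSpace ℝ (Fin n)) ∈ normalCone C xstar := by
    refine ⟨hxsC, fun _ => xstar, fun _ => 0, fun t => ⟨hxsC, fun ε hε => ⟨1, one_pos,
      fun v hv hlt => ?_⟩⟩, tendsto_const_nhds, tendsto_const_nhds⟩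
    rw [inner_zero_left]
    positivity
  obtain ⟨h1, _⟩ := hreg u₀ 0 hu₀N h0N (by rw [hBu₀, add_zero])
  have : ‖u₀‖ = 1 := mem_sphere_zero_iff_norm.mp hu₀mem
  rw [h1] at this
  simp at this
end

section
/- Let x* ∈ C with Ax* ∈ D, and suppose the pair {C, A⁻¹D} has a linearly regular intersection with respect to A at x*. Then there exist γ₂ ∈ [0, 1) and ε₂ > 0 such that ⟨v, Aᵀ(Ax − η)⟩ ≥ −γ₂·‖Aᵀ(Ax − η)‖·‖v‖ whenever x ∈ C with ‖x − x*‖ ≤ ε₂, η ∈ Proj_D(Ax), and v ∈ N_C(x). -/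
open Filter Topology Metric
open scoped RealInnerProductSpace

section Aux

variable {E : Type*} [NormedAddCommGroup E] [InnerProductSpace ℝ E]

lemma reg_subset_normal {S : Set E} {x v : E} (h : v ∈ regNormalCone S x) :
    v ∈ normalCone S x :=
  ⟨h.1, fun _ => x, fun _ => v, fun _ => h, tendsto_const_nhds, tendsto_const_nhds⟩

lemma zero_mem_reg {S : Set E} {x : E} (hx : x ∈ S) : (0 : E) ∈ regNormalCone S x := by
  refine ⟨hx, fun ε hε => ⟨1, one_pos, fun u hu hd => ?_⟩⟩
  simp only [inner_zero_left]
  positivity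

lemma smul_mem_reg {S : Set E} {x v : E} {c : ℝ} (hc : 0 < c)
    (h : v ∈ regNormalCone S x) : c • v ∈ regNormalCone S x := by
  refine ⟨h.1, fun ε hε => ?_⟩
  obtain ⟨δ, hδ, hδ'⟩ := h.2 (ε / c) (by positivity)
  refine ⟨δ, hδ, fun u hu hd => ?_⟩
  have h1 := hδ' u hu hd
  rw [real_inner_smul_left]
  have h2 : c * (ε / c * ‖u - x‖) = ε * ‖u - x‖ := by field_simp
  linarith [mul_le_mul_of_nonneg_left h1 hc.le]

lemma smul_mem_normal {S : Set E} {x v : E} {c : ℝ} (hc : 0 < c)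
    (h : v ∈ normalCone S x) : c • v ∈ normalCone S x := by
  obtain ⟨hx, xs, vs, hr, hxs, hvs⟩ := h
  exact ⟨hx, xs, fun t => c • vs t, fun t => smul_mem_reg hc (hr t), hxs,
    hvs.const_smul c⟩

lemma normal_osc {S : Set E} {xs vs : ℕ → E} {x v : E}
    (hmem : ∀ t, vs t ∈ normalCone S (xs t))
    (hx : Tendsto xs atTop (𝓝 x)) (hv : Tendsto vs atTop (𝓝 v))
    (hxS : x ∈ S) : v ∈ normalCone S x := by
  have key : ∀ t : ℕ, ∃ y u : E, u ∈ regNormalCone S y ∧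
      dist y (xs t) < 1 / ((t : ℝ) + 1) ∧ dist u (vs t) < 1 / ((t : ℝ) + 1) := by
    intro t
    obtain ⟨_, ys, us, hr, hys, hus⟩ := hmem t
    have hpos : (0 : ℝ) < 1 / ((t : ℝ) + 1) := by positivity
    obtain ⟨N1, hN1⟩ := (Metric.tendsto_atTop.mp hys) _ hpos
    obtain ⟨N2, hN2⟩ := (Metric.tendsto_atTop.mp hus) _ hpos
    exact ⟨ys (max N1 N2), us (max N1 N2), hr _,
      hN1 _ (le_max_left _ _), hN2 _ (le_max_right _ _)⟩
  choose Y U hUreg hYd hUd using key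
  have h0 : Tendsto (fun t : ℕ => 1 / ((t : ℝ) + 1)) atTop (𝓝 0) :=
    tendsto_one_div_add_atTop_nhds_zero_nat
  refine ⟨hxS, Y, U, hUreg, ?_, ?_⟩
  · rw [tendsto_iff_dist_tendsto_zero]
    refine squeeze_zero (fun t => dist_nonneg)
      (fun t => (dist_triangle (Y t) (xs t) x).trans
        (add_le_add (hYd t).le le_rfl)) ?_
    simpa using h0.add (tendsto_iff_dist_tendsto_zero.mp hx)
  · rw [tendsto_iff_dist_tendsto_zero]
    refine squeeze_zero (fun t => dist_nonneg)
      (fun t => (dist_triangle (U t) (vs t) v).trans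
        (add_le_add (hUd t).le le_rfl)) ?_
    simpa using h0.add (tendsto_iff_dist_tendsto_zero.mp hv)

lemma proj_mem_reg {S : Set E} {y η : E} (h : η ∈ projSet S y) :
    y - η ∈ regNormalCone S η := by
  obtain ⟨hη, hd⟩ := h
  refine ⟨hη, fun ε hε => ⟨2 * ε, by positivity, fun u hu hd' => ?_⟩⟩
  have h1 : dist y η ≤ dist y u := hd ▸ Metric.infDist_le_dist_of_mem hu
  have h2 : ‖y - η‖ ≤ ‖y - u‖ := by rwa [dist_eq_norm, dist_eq_norm] at h1
  have h3 : ‖y - η‖ ^ 2 ≤ ‖y - u‖ ^ 2 := by nlinarith [norm_nonneg (y - η)]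
  have hexp : ‖y - u‖ ^ 2 = ‖y - η‖ ^ 2 - 2 * ⟪y - η, u - η⟫ + ‖u - η‖ ^ 2 := by
    have he : y - u = (y - η) - (u - η) := by abel
    rw [he, norm_sub_sq_real]
    try ring
  nlinarith [norm_nonneg (u - η)]

end Aux

set_option maxHeartbeats 1000000 in
/-- Under linearly regular intersection of `{C, A⁻¹D}` with respect to `A`
at `x*`, there are `γ₂ ∈ [0, 1)` and `ε₂ > 0` with
`⟨v, Aᵀ(Ax − η)⟩ ≥ −γ₂‖Aᵀ(Ax − η)‖‖v‖` whenever `x ∈ C`, `‖x − x*‖ ≤ ε₂`,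
`η ∈ Proj_D(Ax)` and `v ∈ N_C(x)`. -/
theorem stmt_14 (n m : ℕ)
    (A : EuclideanSpace ℝ (Fin n) →L[ℝ] EuclideanSpace ℝ (Fin m))
    (C : Set (EuclideanSpace ℝ (Fin n))) (D : Set (EuclideanSpace ℝ (Fin m)))
    (hCne : C.Nonempty) (hCcl : IsClosed C) (hDne : D.Nonempty) (hDcl : IsClosed D)
    (xstar : EuclideanSpace ℝ (Fin n)) (hxsC : xstar ∈ C) (hxsD : A xstar ∈ D)
    (hreg : ∀ w v, w ∈ normalCone D (A xstar) → v ∈ normalCone C xstar →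
      (ContinuousLinearMap.adjoint A) w + v = 0 → w = 0 ∧ v = 0) :
    ∃ γ₂ : ℝ, 0 ≤ γ₂ ∧ γ₂ < 1 ∧ ∃ ε₂ > (0 : ℝ),
      ∀ x ∈ C, ‖x - xstar‖ ≤ ε₂ → ∀ η ∈ projSet D (A x), ∀ v ∈ normalCone C x,
        ⟪v, (ContinuousLinearMap.adjoint A) (A x - η)⟫ ≥
          -(γ₂ * ‖(ContinuousLinearMap.adjoint A) (A x - η)‖ * ‖v‖) := by
  by_contra hcon
  push_neg at hcon
  set B := ContinuousLinearMap.adjoint A with hBdef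
  have h0 : Tendsto (fun t : ℕ => 1 / ((t : ℝ) + 1)) atTop (𝓝 0) :=
    tendsto_one_div_add_atTop_nhds_zero_nat
  have hsel : ∀ t : ℕ, ∃ x, x ∈ C ∧ ‖x - xstar‖ ≤ 1 / ((t : ℝ) + 1) ∧
      ∃ η, η ∈ projSet D (A x) ∧ ∃ v, v ∈ normalCone C x ∧
        ⟪v, B (A x - η)⟫ < -((1 - 1 / ((t : ℝ) + 1)) * ‖B (A x - η)‖ * ‖v‖) := by
    intro t
    have ht : (0 : ℝ) < 1 / ((t : ℝ) + 1) := by positivity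
    have ht1 : 1 / ((t : ℝ) + 1) ≤ 1 := by
      rw [div_le_one (by positivity)]
      linarith [Nat.cast_nonneg (α := ℝ) t]
    obtain ⟨x, hxC, hxd, η, hη, v, hv, hlt⟩ :=
      hcon (1 - 1 / ((t : ℝ) + 1)) (by linarith) (by linarith) _ ht
    exact ⟨x, hxC, hxd, η, hη, v, hv, hlt⟩
  choose x hxC hxd η hη v hv hlt using hsel
  have hvne : ∀ t, v t ≠ 0 := by
    intro t h
    have h1 := hlt t
    rw [h] at h1
    simp at h1
  have hBwne : ∀ t, B (A (x t) - η t) ≠ 0 := by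
    intro t h
    have h1 := hlt t
    rw [h] at h1
    simp at h1
  have hwne : ∀ t, A (x t) - η t ≠ 0 := fun t h => hBwne t (by rw [h, map_zero])
  have hwpos : ∀ t, 0 < ‖A (x t) - η t‖ := fun t => norm_pos_iff.mpr (hwne t)
  have hvpos : ∀ t, 0 < ‖v t‖ := fun t => norm_pos_iff.mpr (hvne t)
  set θ : ℕ → EuclideanSpace ℝ (Fin m) :=
    fun t => ‖A (x t) - η t‖⁻¹ • (A (x t) - η t) with hθdef
  set vh : ℕ → EuclideanSpace ℝ (Fin n) := fun t => ‖v t‖⁻¹ • v t with hvhdef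
  have hθnorm : ∀ t, ‖θ t‖ = 1 := fun t => norm_smul_inv_norm (hwne t)
  have hvhnorm : ∀ t, ‖vh t‖ = 1 := fun t => norm_smul_inv_norm (hvne t)
  have hkey : ∀ t : ℕ, ⟪vh t, B (θ t)⟫ ≤ -((1 - 1 / ((t : ℝ) + 1)) * ‖B (θ t)‖) := by
    intro t
    have e1 : ⟪vh t, B (θ t)⟫ =
        ‖v t‖⁻¹ * (‖A (x t) - η t‖⁻¹ * ⟪v t, B (A (x t) - η t)⟫) := by
      show ⟪‖v t‖⁻¹ • v t, B (‖A (x t) - η t‖⁻¹ • (A (x t) - η t))⟫ = _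
      rw [map_smul, real_inner_smul_left, real_inner_smul_right]
    have e2 : ‖B (θ t)‖ = ‖A (x t) - η t‖⁻¹ * ‖B (A (x t) - η t)‖ := by
      simp [hθdef, map_smul, norm_smul, Real.norm_eq_abs,
        abs_of_nonneg (inv_nonneg.mpr (norm_nonneg _))]
    rw [e1, e2]
    have h := (hlt t).le
    have hmul : ‖v t‖⁻¹ * (‖A (x t) - η t‖⁻¹ * ⟪v t, B (A (x t) - η t)⟫) ≤
        ‖v t‖⁻¹ * (‖A (x t) - η t‖⁻¹ *
          (-((1 - 1 / ((t : ℝ) + 1)) * ‖B (A (x t) - η t)‖ * ‖v t‖))) := by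
      apply mul_le_mul_of_nonneg_left
        (mul_le_mul_of_nonneg_left h (by positivity)) (by positivity)
    refine hmul.trans (le_of_eq ?_)
    have h1 := (hwpos t).ne'
    have h2 := (hvpos t).ne'
    field_simp
  have hcomp : IsCompact ((Metric.sphere (0 : EuclideanSpace ℝ (Fin m)) 1) ×ˢ
      (Metric.sphere (0 : EuclideanSpace ℝ (Fin n)) 1)) :=
    (isCompact_sphere _ _).prod (isCompact_sphere _ _)
  have hmemK : ∀ t : ℕ, (θ t, vh t) ∈ (Metric.sphere (0 : EuclideanSpace ℝ (Fin m)) 1) ×ˢ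
      (Metric.sphere (0 : EuclideanSpace ℝ (Fin n)) 1) := fun t =>
    Set.mk_mem_prod (by simpa [mem_sphere_zero_iff_norm] using hθnorm t)
      (by simpa [mem_sphere_zero_iff_norm] using hvhnorm t)
  obtain ⟨⟨θL, vL⟩, hKmem, φ, hφ, hφt⟩ := hcomp.tendsto_subseq hmemK
  have hθconv : Tendsto (fun t => θ (φ t)) atTop (𝓝 θL) :=
    (continuous_fst.tendsto _).comp hφt
  have hvconv : Tendsto (fun t => vh (φ t)) atTop (𝓝 vL) :=
    (continuous_snd.tendsto _).comp hφt
  have hθLnorm : ‖θL‖ = 1 := by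
    have := hKmem.1
    simpa [mem_sphere_zero_iff_norm] using this
  have hvLnorm : ‖vL‖ = 1 := by
    have := hKmem.2
    simpa [mem_sphere_zero_iff_norm] using this
  have hxt : Tendsto x atTop (𝓝 xstar) := by
    rw [tendsto_iff_dist_tendsto_zero]
    refine squeeze_zero (fun t => dist_nonneg) (fun t => ?_) h0
    rw [dist_eq_norm]
    exact hxd t
  have hxφ : Tendsto (fun t => x (φ t)) atTop (𝓝 xstar) := hxt.comp hφ.tendsto_atTop
  have hAx : Tendsto (fun t => A (x t)) atTop (𝓝 (A xstar)) :=
    (A.continuous.tendsto _).comp hxt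
  have hηt : Tendsto η atTop (𝓝 (A xstar)) := by
    rw [tendsto_iff_dist_tendsto_zero]
    have hd2 : ∀ t, dist (η t) (A xstar) ≤ 2 * dist (A (x t)) (A xstar) := by
      intro t
      have h1 : dist (η t) (A (x t)) ≤ dist (A (x t)) (A xstar) := by
        rw [dist_comm, (hη t).2]
        exact infDist_le_dist_of_mem hxsD
      have h3 := dist_triangle (η t) (A (x t)) (A xstar)
      linarith
    refine squeeze_zero (fun t => dist_nonneg) hd2 ?_
    have h4 := tendsto_iff_dist_tendsto_zero.mp hAx
    simpa using h4.const_mul 2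
  have hηφ : Tendsto (fun t => η (φ t)) atTop (𝓝 (A xstar)) := hηt.comp hφ.tendsto_atTop
  have hθmem : ∀ t, θ t ∈ normalCone D (η t) := fun t =>
    smul_mem_normal (inv_pos.mpr (hwpos t)) (reg_subset_normal (proj_mem_reg (hη t)))
  have hθL : θL ∈ normalCone D (A xstar) :=
    normal_osc (fun t => hθmem (φ t)) hηφ hθconv hxsD
  have hvL : vL ∈ normalCone C xstar :=
    normal_osc (fun t => smul_mem_normal (inv_pos.mpr (hvpos (φ t))) (hv (φ t)))
      hxφ hvconv hxsC
  have hγφ : Tendsto (fun t => 1 - 1 / ((φ t : ℝ) + 1)) atTop (𝓝 1) := by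
    have h5 : Tendsto (fun t => 1 / ((φ t : ℝ) + 1)) atTop (𝓝 0) :=
      h0.comp hφ.tendsto_atTop
    simpa using (tendsto_const_nhds (x := (1 : ℝ)) (f := atTop)).sub h5
  have hBθconv : Tendsto (fun t => B (θ (φ t))) atTop (𝓝 (B θL)) :=
    (B.continuous.tendsto _).comp hθconv
  have hlim1 : Tendsto (fun t => ⟪vh (φ t), B (θ (φ t))⟫) atTop (𝓝 ⟪vL, B θL⟫) :=
    hvconv.inner hBθconv
  have hlim2 : Tendsto (fun t => -((1 - 1 / ((φ t : ℝ) + 1)) * ‖B (θ (φ t))‖)) atTop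
      (𝓝 (-(1 * ‖B θL‖))) := (hγφ.mul hBθconv.norm).neg
  have hfin : ⟪vL, B θL⟫ ≤ -(1 * ‖B θL‖) :=
    le_of_tendsto_of_tendsto' hlim1 hlim2 (fun t => hkey (φ t))
  rw [one_mul] at hfin
  by_cases hz : B θL = 0
  · obtain ⟨h1, _⟩ := hreg θL 0 hθL (reg_subset_normal (zero_mem_reg hxsC))
      (by rw [hz, add_zero])
    rw [h1, norm_zero] at hθLnorm
    norm_num at hθLnorm
  · have hr : 0 < ‖B θL‖ := norm_pos_iff.mpr hz
    have hmem' : ‖B θL‖⁻¹ • θL ∈ normalCone D (A xstar) :=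
      smul_mem_normal (inv_pos.mpr hr) hθL
    have hzero : B (‖B θL‖⁻¹ • θL) + vL = 0 := by
      have e1 : B (‖B θL‖⁻¹ • θL) = ‖B θL‖⁻¹ • B θL := map_smul _ _ _
      have hnn : ‖B (‖B θL‖⁻¹ • θL) + vL‖ ^ 2 ≤ 0 := by
        rw [norm_add_sq_real, e1]
        have e2 : ‖(‖B θL‖⁻¹ • B θL)‖ = 1 := norm_smul_inv_norm hz
        have e3 : ⟪‖B θL‖⁻¹ • B θL, vL⟫ = ‖B θL‖⁻¹ * ⟪vL, B θL⟫ := by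
          rw [real_inner_smul_left, real_inner_comm]
        rw [e2, hvLnorm, e3]
        have e4 : ‖B θL‖⁻¹ * ⟪vL, B θL⟫ ≤ -1 := by
          have h6 := mul_le_mul_of_nonneg_left hfin (inv_nonneg.mpr hr.le)
          rwa [mul_neg, inv_mul_cancel₀ hr.ne'] at h6
        nlinarith [e4]
      have h7 := norm_nonneg (B (‖B θL‖⁻¹ • θL) + vL)
      have h8 : ‖B (‖B θL‖⁻¹ • θL) + vL‖ = 0 := by nlinarith
      exact norm_eq_zero.mp h8
    obtain ⟨_, h2⟩ := hreg _ vL hmem' hvL hzero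
    rw [h2, norm_zero] at hvLnorm
    norm_num at hvLnorm
end

section
/- Let x* ∈ C with Ax* ∈ D, and suppose the pair {C, A⁻¹D} has a linearly regular intersection with respect to A at x*. Then there exist c > 0 and ε > 0 such that for every x ∈ C with ‖x − x*‖ ≤ ε, every η ∈ Proj_D(Ax), and every v ∈ N_C(x), one has ‖Aᵀ(Ax − η) + v‖ ≥ c·d(Ax, D). Equivalently (since F(x) = ½ d(Ax, D)² on C and F(x*) = 0, and all elements of ∂F(x) have the form Aᵀ(Ax − η) + v), the function F has the Kurdyka–Łojasiewicz property with exponent ½ at x*. -/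
open Filter Topology Metric
open scoped RealInnerProductSpace

/-!
If the bound failed, there would be `x_t → x*`, `η_t ∈ Proj_D(A x_t)` and `v_t ∈ N_C(x_t)` with
`‖Aᵀ(A x_t - η_t) + v_t‖ = o(d(A x_t, D))`. Dividing by `d(A x_t, D)` gives unit proximal normals
`w_t = (A x_t - η_t) / d(A x_t, D)` to `D` at `η_t → A x*` and normals `u_t` to `C` at `x_t` with
`Aᵀ w_t + u_t → 0`. A limit point `w` of `w_t` on the unit sphere is then a nonzero element of
`N_D(A x*)` with `-Aᵀ w ∈ N_C(x*)`, against linear regularity.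

For the KL inequality, `½ ‖A · - η‖²` with `η ∈ Proj_D(A x)` is a smooth majorant of
`½ d(A ·, D)²` touching it at `x`, so every regular subgradient of `F` at `x` has the form
`Aᵀ(A x - η) + v` with `v ∈ N̂_C(x)`. The error bound thus holds for regular subgradients, passes
to limiting ones, and `√F ≤ d(A ·, D)` on `C`.
-/

section Projection

variable {E : Type*} [NormedAddCommGroup E]

theorem norm_sub_eq_infDist_of_mem_projSet {D : Set E} {y η : E} (hη : η ∈ projSet D y) :
    ‖y - η‖ = infDist y D := by
  rw [← dist_eq_norm, hη.2]

theorem tendsto_of_mem_projSet {D : Set E} {y : E} (hy : y ∈ D) {ys ηs : ℕ → E}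
    (hη : ∀ t, ηs t ∈ projSet D (ys t)) (hys : Tendsto ys atTop (𝓝 y)) :
    Tendsto ηs atTop (𝓝 y) := by
  rw [tendsto_iff_dist_tendsto_zero] at hys ⊢
  refine squeeze_zero (fun _ => dist_nonneg) (fun t => ?_) (by simpa using hys.const_mul 2)
  have hclose : dist (ys t) (ηs t) ≤ dist (ys t) y := (hη t).2 ▸ infDist_le_dist_of_mem hy
  linarith [dist_triangle (ηs t) (ys t) y, dist_comm (ηs t) (ys t)]

end Projection

section NormalCone

variable {E : Type*} [NormedAddCommGroup E] [InnerProductSpace ℝ E]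

theorem sub_mem_regNormalCone_of_mem_projSet {D : Set E} {y η : E} (hη : η ∈ projSet D y) :
    y - η ∈ regNormalCone D η := by
  refine ⟨hη.1, fun ε hε => ⟨2 * ε, by linarith, fun u hu hlt => ?_⟩⟩
  have hclose : ‖y - η‖ ≤ ‖y - u‖ := by
    rw [norm_sub_eq_infDist_of_mem_projSet hη, ← dist_eq_norm]
    exact infDist_le_dist_of_mem hu
  have hsq : ‖y - η‖ ^ 2 ≤ ‖y - u‖ ^ 2 := by gcongr
  have hexpand : ‖y - u‖ ^ 2 = ‖y - η‖ ^ 2 - 2 * ⟪y - η, u - η⟫ + ‖u - η‖ ^ 2 := by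
    rw [show y - u = (y - η) - (u - η) by abel, norm_sub_sq_real]
  nlinarith [norm_nonneg (u - η)]

theorem smul_mem_regNormalCone {S : Set E} {x v : E} {c : ℝ} (hc : 0 < c)
    (hv : v ∈ regNormalCone S x) : c • v ∈ regNormalCone S x := by
  refine ⟨hv.1, fun ε hε => ?_⟩
  obtain ⟨δ, hδ, hbound⟩ := hv.2 (ε / c) (by positivity)
  refine ⟨δ, hδ, fun u hu hlt => ?_⟩
  calc ⟪c • v, u - x⟫ = c * ⟪v, u - x⟫ := real_inner_smul_left _ _ _
    _ ≤ c * (ε / c * ‖u - x‖) := by gcongr; exact hbound u hu hlt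
    _ = ε * ‖u - x‖ := by field_simp

theorem mem_normalCone_iff_mem_closure {S : Set E} {x v : E} :
    v ∈ normalCone S x ↔ x ∈ S ∧ (x, v) ∈ closure {p : E × E | p.2 ∈ regNormalCone S p.1} := by
  simp only [normalCone, Set.mem_ofPred_eq, mem_closure_iff_seq_limit,
    nhds_prod_eq, Filter.tendsto_prod_iff']
  constructor
  · rintro ⟨hx, xs, vs, hmem, hxs, hvs⟩
    exact ⟨hx, fun t => (xs t, vs t), hmem, hxs, hvs⟩
  · rintro ⟨hx, ps, hmem, hxs, hvs⟩
    exact ⟨hx, fun t => (ps t).1, fun t => (ps t).2, hmem, hxs, hvs⟩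

theorem mem_normalCone_of_mem_regNormalCone {S : Set E} {x v : E}
    (hv : v ∈ regNormalCone S x) : v ∈ normalCone S x :=
  ⟨hv.1, fun _ => x, fun _ => v, fun _ => hv, tendsto_const_nhds, tendsto_const_nhds⟩

theorem smul_mem_normalCone {S : Set E} {x v : E} {c : ℝ} (hc : 0 < c)
    (hv : v ∈ normalCone S x) : c • v ∈ normalCone S x := by
  obtain ⟨hx, xs, vs, hmem, hxs, hvs⟩ := hv
  exact ⟨hx, xs, fun t => c • vs t, fun t => smul_mem_regNormalCone hc (hmem t), hxs,
    hvs.const_smul c⟩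

theorem mem_normalCone_of_tendsto {S : Set E} {x v : E} (hx : x ∈ S) {xs vs : ℕ → E}
    (hmem : ∀ t, vs t ∈ normalCone S (xs t))
    (hxs : Tendsto xs atTop (𝓝 x)) (hvs : Tendsto vs atTop (𝓝 v)) :
    v ∈ normalCone S x :=
  mem_normalCone_iff_mem_closure.2 ⟨hx, isClosed_closure.mem_of_tendsto (hxs.prodMk_nhds hvs)
    (Eventually.of_forall fun t => (mem_normalCone_iff_mem_closure.1 (hmem t)).2)⟩

theorem exists_normalCone_ne_zero_of_tendsto {F : Type*} [NormedAddCommGroup F]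
    [InnerProductSpace ℝ F] [ProperSpace F] (B : F →L[ℝ] E) {C : Set E} {D : Set F}
    {x : E} {y : F} (hx : x ∈ C) (hy : y ∈ D) {xs us : ℕ → E} {ys ws : ℕ → F}
    (hxs : Tendsto xs atTop (𝓝 x)) (hys : Tendsto ys atTop (𝓝 y))
    (hws : ∀ t, ws t ∈ regNormalCone D (ys t)) (hwn : ∀ t, ‖ws t‖ = 1)
    (hus : ∀ t, us t ∈ normalCone C (xs t))
    (hsum : Tendsto (fun t => B (ws t) + us t) atTop (𝓝 0)) :
    ∃ w ∈ normalCone D y, w ≠ 0 ∧ -B w ∈ normalCone C x := by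
  obtain ⟨w, hw, ψ, hψ, hwlim⟩ := (isCompact_sphere (0 : F) 1).tendsto_subseq
    (fun t => mem_sphere_zero_iff_norm.2 (hwn t))
  have hulim : Tendsto (fun t => us (ψ t)) atTop (𝓝 (-B w)) := by
    simpa using (hsum.comp hψ.tendsto_atTop).sub ((B.continuous.tendsto w).comp hwlim)
  refine ⟨w, ⟨hy, ys ∘ ψ, ws ∘ ψ, fun t => hws (ψ t), hys.comp hψ.tendsto_atTop, hwlim⟩,
    ne_zero_of_mem_unit_sphere ⟨w, hw⟩, ?_⟩
  exact mem_normalCone_of_tendsto hx (fun t => hus (ψ t)) (hxs.comp hψ.tendsto_atTop) hulim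

end NormalCone

section Subdifferential

variable {E : Type*} [NormedAddCommGroup E] [InnerProductSpace ℝ E]

theorem sub_mem_regNormalCone_of_mem_regSubdiff {φ g : E → ℝ} {C : Set E} {x w g' : E}
    {L : ℝ} (hL : 0 ≤ L) (hle : ∀ u ∈ C, φ u ≤ g u) (heq : φ x = g x)
    (hg : ∀ u, g u - g x - ⟪g', u - x⟫ ≤ L * ‖u - x‖ ^ 2) (hw : w ∈ regSubdiff φ C x) :
    w - g' ∈ regNormalCone C x := by
  refine ⟨hw.1, fun ε hε => ?_⟩
  obtain ⟨δ, hδ, hsub⟩ := hw.2 (ε / 2) (by positivity)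
  refine ⟨min δ (ε / (2 * (L + 1))), lt_min hδ (by positivity), fun u hu hlt => ?_⟩
  have hsmall : L * ‖u - x‖ ≤ ε / 2 := by
    have hr : ‖u - x‖ * (2 * (L + 1)) ≤ ε :=
      (le_div_iff₀ (by positivity)).1 (hlt.trans_le (min_le_right _ _)).le
    nlinarith [norm_nonneg (u - x)]
  have hsubgrad := hsub u hu (hlt.trans_le (min_le_left _ _))
  have hmajor := hle u hu
  have hremainder := hg u
  rw [inner_sub_left]
  nlinarith [norm_nonneg (u - x)]

end Subdifferential

section ErrorBound

variable {E F : Type*} [NormedAddCommGroup E] [InnerProductSpace ℝ E] [CompleteSpace E]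
  [NormedAddCommGroup F] [InnerProductSpace ℝ F] [CompleteSpace F]

theorem exists_errorBound_of_linearRegular [ProperSpace F] (A : E →L[ℝ] F) {C : Set E}
    {D : Set F} {xstar : E} (hxsC : xstar ∈ C) (hxsD : A xstar ∈ D)
    (hreg : ∀ w v, w ∈ normalCone D (A xstar) → v ∈ normalCone C xstar →
      (ContinuousLinearMap.adjoint A) w + v = 0 → w = 0 ∧ v = 0) :
    ∃ c > (0 : ℝ), ∃ ε > (0 : ℝ), ∀ x ∈ C, ‖x - xstar‖ ≤ ε →
      ∀ η ∈ projSet D (A x), ∀ v ∈ normalCone C x,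
        ‖(ContinuousLinearMap.adjoint A) (A x - η) + v‖ ≥ c * infDist (A x) D := by
  by_contra! hbad
  choose x hxC hxnear η hη v hv hlt using fun t : ℕ =>
    hbad (1 / (t + 1)) (by positivity) (1 / (t + 1)) (by positivity)
  set d : ℕ → ℝ := fun t => infDist (A (x t)) D
  have hd : ∀ t, 0 < d t := fun t =>
    pos_of_mul_pos_right ((norm_nonneg _).trans_lt (hlt t)) (by positivity)
  have hxlim : Tendsto x atTop (𝓝 xstar) :=
    tendsto_iff_norm_sub_tendsto_zero.2 <|
      squeeze_zero (fun _ => norm_nonneg _) hxnear tendsto_one_div_add_atTop_nhds_zero_nat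
  have hsum : Tendsto (fun t => (ContinuousLinearMap.adjoint A) ((d t)⁻¹ • (A (x t) - η t)) +
      (d t)⁻¹ • v t) atTop (𝓝 0) := by
    refine squeeze_zero_norm (fun t => ?_) tendsto_one_div_add_atTop_nhds_zero_nat
    rw [map_smul, ← smul_add, norm_smul, Real.norm_of_nonneg (inv_pos.2 (hd t)).le,
      inv_mul_le_iff₀ (hd t), mul_comm]
    exact (hlt t).le
  obtain ⟨w, hwD, hw0, hwC⟩ := exists_normalCone_ne_zero_of_tendsto
    (ContinuousLinearMap.adjoint A) hxsC hxsD hxlim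
    (tendsto_of_mem_projSet hxsD hη ((A.continuous.tendsto _).comp hxlim))
    (fun t => smul_mem_regNormalCone (inv_pos.2 (hd t))
      (sub_mem_regNormalCone_of_mem_projSet (hη t)))
    (fun t => by
      rw [norm_smul, Real.norm_of_nonneg (inv_pos.2 (hd t)).le,
        norm_sub_eq_infDist_of_mem_projSet (hη t), inv_mul_cancel₀ (hd t).ne'])
    (fun t => smul_mem_normalCone (inv_pos.2 (hd t)) (hv t)) hsum
  exact hw0 (hreg w _ hwD hwC (add_neg_cancel _)).1

end ErrorBound

section SplitFeasibility

variable {n m : ℕ} (A : EuclideanSpace ℝ (Fin n) →L[ℝ] EuclideanSpace ℝ (Fin m))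
  {C : Set (EuclideanSpace ℝ (Fin n))} {D : Set (EuclideanSpace ℝ (Fin m))}

theorem phiF_eq_zero_of_mem {x : EuclideanSpace ℝ (Fin n)} (hx : A x ∈ D) : phiF A D x = 0 := by
  simp [phiF, infDist_zero_of_mem hx]

theorem sqrt_phiF_le_infDist (x : EuclideanSpace ℝ (Fin n)) :
    Real.sqrt (phiF A D x) ≤ infDist (A x) D := by
  rw [Real.sqrt_le_left infDist_nonneg, phiF]
  linarith [sq_nonneg (infDist (A x) D)]

theorem sub_adjoint_mem_regNormalCone_of_mem_regSubdiff {x w : EuclideanSpace ℝ (Fin n)}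
    {η : EuclideanSpace ℝ (Fin m)} (hη : η ∈ projSet D (A x))
    (hw : w ∈ regSubdiff (phiF A D) C x) :
    w - (ContinuousLinearMap.adjoint A) (A x - η) ∈ regNormalCone C x := by
  refine sub_mem_regNormalCone_of_mem_regSubdiff (g := fun u => ‖A u - η‖ ^ 2 / 2)
    (L := ‖A‖ ^ 2 / 2) (by positivity) (fun u _ => ?_) ?_ (fun u => ?_) hw
  · rw [phiF, ← dist_eq_norm]
    gcongr
    · exact infDist_nonneg
    · exact infDist_le_dist_of_mem hη.1
  · rw [phiF, norm_sub_eq_infDist_of_mem_projSet hη]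
  · have hexpand : ‖A u - η‖ ^ 2 =
        ‖A x - η‖ ^ 2 + 2 * ⟪A x - η, A (u - x)⟫ + ‖A (u - x)‖ ^ 2 := by
      rw [map_sub, show A u - η = (A x - η) + (A u - A x) by abel, norm_add_sq_real]
    have hop : ‖A (u - x)‖ ^ 2 ≤ (‖A‖ * ‖u - x‖) ^ 2 := by gcongr; exact A.le_opNorm _
    rw [ContinuousLinearMap.adjoint_inner_left]
    nlinarith

theorem le_norm_of_mem_limSubdiff (hDcl : IsClosed D) (hDne : D.Nonempty) {c : ℝ}
    {U : Set (EuclideanSpace ℝ (Fin n))} (hU : IsOpen U)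
    (hbound : ∀ x ∈ C, x ∈ U → ∀ η ∈ projSet D (A x), ∀ v ∈ normalCone C x,
      c * infDist (A x) D ≤ ‖(ContinuousLinearMap.adjoint A) (A x - η) + v‖)
    {x w : EuclideanSpace ℝ (Fin n)} (hx : x ∈ U) (hw : w ∈ limSubdiff (phiF A D) C x) :
    c * infDist (A x) D ≤ ‖w‖ := by
  obtain ⟨-, xs, ws, hmem, hxs, -, hws⟩ := hw
  have hev : ∀ᶠ t in atTop, c * infDist (A (xs t)) D ≤ ‖ws t‖ := by
    filter_upwards [hxs (hU.mem_nhds hx)] with t ht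
    obtain ⟨η, hηD, hηdist⟩ := hDcl.exists_infDist_eq_dist hDne (A (xs t))
    have hη : η ∈ projSet D (A (xs t)) := ⟨hηD, hηdist.symm⟩
    simpa using hbound (xs t) (hmem t).1 ht η hη _ (mem_normalCone_of_mem_regNormalCone
      (sub_adjoint_mem_regNormalCone_of_mem_regSubdiff A hη (hmem t)))
  refine le_of_tendsto_of_tendsto ?_ hws.norm hev
  exact (((continuous_infDist_pt D).comp A.continuous).tendsto x).comp hxs |>.const_mul c

end SplitFeasibility

theorem stmt_15_general (n m : ℕ)
    (A : EuclideanSpace ℝ (Fin n) →L[ℝ] EuclideanSpace ℝ (Fin m))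
    (C : Set (EuclideanSpace ℝ (Fin n))) (D : Set (EuclideanSpace ℝ (Fin m)))
    (hDcl : IsClosed D)
    (xstar : EuclideanSpace ℝ (Fin n)) (hxsC : xstar ∈ C) (hxsD : A xstar ∈ D)
    (hreg : ∀ w v, w ∈ normalCone D (A xstar) → v ∈ normalCone C xstar →
      (ContinuousLinearMap.adjoint A) w + v = 0 → w = 0 ∧ v = 0) :
    (∃ c > (0 : ℝ), ∃ ε > (0 : ℝ), ∀ x ∈ C, ‖x - xstar‖ ≤ ε →
      ∀ η ∈ projSet D (A x), ∀ v ∈ normalCone C x,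
        ‖(ContinuousLinearMap.adjoint A) (A x - η) + v‖ ≥ c * Metric.infDist (A x) D) ∧
    (∃ c₀ > (0 : ℝ), ∃ ε > (0 : ℝ), ∃ s > (0 : ℝ), ∀ x ∈ C, ‖x - xstar‖ ≤ ε →
      0 < phiF A D x - phiF A D xstar → phiF A D x - phiF A D xstar < s →
      ∀ w ∈ limSubdiff (phiF A D) C x,
        ‖w‖ ≥ c₀ * Real.sqrt (phiF A D x - phiF A D xstar)) := by
  obtain ⟨c, hc, ε, hε, hbound⟩ := exists_errorBound_of_linearRegular A hxsC hxsD hreg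
  refine ⟨⟨c, hc, ε, hε, hbound⟩, c, hc, ε / 2, half_pos hε, 1, one_pos,
    fun x _ hx _ _ w hw => ?_⟩
  rw [phiF_eq_zero_of_mem A hxsD, sub_zero]
  calc c * Real.sqrt (phiF A D x) ≤ c * infDist (A x) D := by
        gcongr; exact sqrt_phiF_le_infDist A x
    _ ≤ ‖w‖ := le_norm_of_mem_limSubdiff A hDcl ⟨_, hxsD⟩ isOpen_ball
        (fun y hyC hyU => hbound y hyC (mem_ball_iff_norm.1 hyU).le)
        (mem_ball_iff_norm.2 (by linarith)) hw

/-- Under linearly regular intersection of `{C, A⁻¹D}` with respect to `A`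
at `x*`: there exist `c > 0` and `ε > 0` such that `‖Aᵀ(Ax − η) + v‖ ≥ c·d(Ax, D)` for all
`x ∈ C` near `x*`, `η ∈ Proj_D(Ax)` and `v ∈ N_C(x)`; equivalently, `F = ½ d(A·, D)² + δ_C`
has the KL property with exponent `½` at `x*`. -/
theorem stmt_15 (n m : ℕ)
    (A : EuclideanSpace ℝ (Fin n) →L[ℝ] EuclideanSpace ℝ (Fin m))
    (C : Set (EuclideanSpace ℝ (Fin n))) (D : Set (EuclideanSpace ℝ (Fin m)))
    (hCne : C.Nonempty) (hCcl : IsClosed C) (hDne : D.Nonempty) (hDcl : IsClosed D)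
    (xstar : EuclideanSpace ℝ (Fin n)) (hxsC : xstar ∈ C) (hxsD : A xstar ∈ D)
    (hreg : ∀ w v, w ∈ normalCone D (A xstar) → v ∈ normalCone C xstar →
      (ContinuousLinearMap.adjoint A) w + v = 0 → w = 0 ∧ v = 0) :
    (∃ c > (0 : ℝ), ∃ ε > (0 : ℝ), ∀ x ∈ C, ‖x - xstar‖ ≤ ε →
      ∀ η ∈ projSet D (A x), ∀ v ∈ normalCone C x,
        ‖(ContinuousLinearMap.adjoint A) (A x - η) + v‖ ≥ c * Metric.infDist (A x) D) ∧
    (∃ c₀ > (0 : ℝ), ∃ ε > (0 : ℝ), ∃ s > (0 : ℝ), ∀ x ∈ C, ‖x - xstar‖ ≤ ε →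
      0 < phiF A D x - phiF A D xstar → phiF A D x - phiF A D xstar < s →
      ∀ w ∈ limSubdiff (phiF A D) C x,
        ‖w‖ ≥ c₀ * Real.sqrt (phiF A D x - phiF A D xstar)) :=
  stmt_15_general n m A C D hDcl xstar hxsC hxsD hreg
end
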